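/- arXiv:1310.1514 — 9 statements merged into one kernel-verified Lean document; each statement's English description precedes it below -/
import Mathlib

section
/- Let K be a convex body in ℝⁿ that is ε-smooth, i.e., K = K' + εBⁿ for some convex body K' and ε > 0. Then the spherical image map u_K : ∂K → S^{n-1}, which assigns to each boundary point its (unique) outer unit normal, is Lipschitz with Lipschitz constant 1/ε. -/
/-!
Write `K = K' + εB`. If `u` is an outer unit normal of `K` at `x`, the ball of radius `ε` around
`x - ε u` lies in `K` and touches `∂K` only at `x`, which forces `c(x) := x - ε u ∈ K'`, and `u` is
then also an outer normal of `K'` at `c(x)`. Monotonicity of the normal cone of `K'` gives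
`⟪c(x) - c(y), u x - u y⟫ ≥ 0`, and since `x - y = c(x) - c(y) + ε (u x - u y)` this yields
`ε ‖u x - u y‖² ≤ ⟪x - y, u x - u y⟫ ≤ ‖x - y‖ ‖u x - u y‖`.
-/

open Metric Set Pointwise
open scoped RealInnerProductSpace

variable {E : Type*} [NormedAddCommGroup E] [InnerProductSpace ℝ E]

def IsOuterNormal (K : Set E) (x v : E) : Prop :=
  ∀ y ∈ K, ⟪y - x, v⟫ ≤ 0

theorem IsOuterNormal.inner_sub_sub_nonneg {K : Set E} {p q u v : E} (hp : p ∈ K) (hq : q ∈ K)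
    (hu : IsOuterNormal K p u) (hv : IsOuterNormal K q v) : 0 ≤ ⟪p - q, u - v⟫ := by
  have hqp := hu q hq
  have hpq := hv p hp
  have hflip : ⟪p - q, u⟫ = -⟪q - p, u⟫ := by rw [← inner_neg_left, neg_sub]
  rw [inner_sub_right, hflip]
  linarith

theorem IsOuterNormal.of_add_closedBall {K : Set E} {ε : ℝ} {z v : E} (hε : 0 ≤ ε)
    (hv : ‖v‖ ≤ 1) (hn : IsOuterNormal (K + closedBall 0 ε) z v) :
    IsOuterNormal K (z - ε • v) v := by
  intro k hk
  have hεv : ε • v ∈ closedBall (0 : E) ε := by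
    rw [mem_closedBall_zero_iff, norm_smul, Real.norm_of_nonneg hε]
    exact mul_le_of_le_one_right hε hv
  have h := hn _ (add_mem_add hk hεv)
  rwa [show k + ε • v - z = k - (z - ε • v) by abel] at h

theorem eq_smul_of_norm_le_of_le_inner {b v : E} {ε : ℝ} (hb : ‖b‖ ≤ ε) (hv : ‖v‖ = 1)
    (h : ε ≤ ⟪b, v⟫) : b = ε • v := by
  have hcs := real_inner_le_norm b v
  rw [hv, mul_one] at hcs
  have hbε : ‖b‖ = ε := le_antisymm hb (h.trans hcs)
  have heq := inner_eq_norm_mul_iff_real.1 (by rw [hv, mul_one]; linarith : ⟪b, v⟫ = ‖b‖ * ‖v‖)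
  rwa [hv, one_smul, hbε] at heq

theorem sub_smul_mem_of_isOuterNormal_add_closedBall {K : Set E} {ε : ℝ} {z v : E}
    (hz : z ∈ K + closedBall 0 ε) (hv : ‖v‖ = 1) (hn : IsOuterNormal (K + closedBall 0 ε) z v) :
    z - ε • v ∈ K := by
  obtain ⟨k, hk, b, hb, rfl⟩ := hz
  rw [mem_closedBall_zero_iff] at hb
  have hε : 0 ≤ ε := (norm_nonneg b).trans hb
  have h := hn.of_add_closedBall hε hv.le k hk
  rw [show k - (k + b - ε • v) = ε • v - b by abel, inner_sub_left, real_inner_smul_left,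
    real_inner_self_eq_norm_sq, hv] at h
  have hb_eq : b = ε • v := eq_smul_of_norm_le_of_le_inner hb hv (by linarith)
  rwa [hb_eq, add_sub_cancel_right]

theorem norm_le_inv_mul_of_mul_norm_sq_le_inner {a b : E} {ε : ℝ} (hε : 0 < ε)
    (h : ε * ‖a‖ ^ 2 ≤ ⟪b, a⟫) : ‖a‖ ≤ ε⁻¹ * ‖b‖ := by
  rw [le_inv_mul_iff₀ hε]
  rcases (norm_nonneg a).eq_or_lt with ha | ha
  · rw [← ha, mul_zero]
    exact norm_nonneg b
  · refine le_of_mul_le_mul_right ?_ ha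
    calc ε * ‖a‖ * ‖a‖ = ε * ‖a‖ ^ 2 := by ring
      _ ≤ ⟪b, a⟫ := h
      _ ≤ ‖b‖ * ‖a‖ := real_inner_le_norm b a

theorem norm_sub_le_of_isOuterNormal_add_closedBall {K : Set E} {ε : ℝ} (hε : 0 < ε)
    {x y u v : E} (hx : x ∈ K + closedBall 0 ε) (hy : y ∈ K + closedBall 0 ε)
    (hu : ‖u‖ = 1) (hv : ‖v‖ = 1)
    (hxu : IsOuterNormal (K + closedBall 0 ε) x u) (hyv : IsOuterNormal (K + closedBall 0 ε) y v) :
    ‖u - v‖ ≤ ε⁻¹ * ‖x - y‖ := by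
  have hcenters : 0 ≤ ⟪(x - ε • u) - (y - ε • v), u - v⟫ :=
    IsOuterNormal.inner_sub_sub_nonneg (sub_smul_mem_of_isOuterNormal_add_closedBall hx hu hxu)
      (sub_smul_mem_of_isOuterNormal_add_closedBall hy hv hyv)
      (hxu.of_add_closedBall hε.le hu.le) (hyv.of_add_closedBall hε.le hv.le)
  refine norm_le_inv_mul_of_mul_norm_sq_le_inner hε ?_
  calc ε * ‖u - v‖ ^ 2 ≤ ⟪(x - ε • u) - (y - ε • v), u - v⟫ + ε * ‖u - v‖ ^ 2 := by linarith
    _ = ⟪x - y, u - v⟫ := by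
      rw [show x - y = (x - ε • u) - (y - ε • v) + ε • (u - v) by module, inner_add_left,
        real_inner_smul_left, real_inner_self_eq_norm_sq]

theorem spherical_image_lipschitz_general
    (n : ℕ) (ε : ℝ) (hε : 0 < ε)
    (K K' : Set (EuclideanSpace ℝ (Fin n)))
    (hK'cpt : IsCompact K')
    (hsmooth : K = K' + closedBall (0 : EuclideanSpace ℝ (Fin n)) ε)
    (u : EuclideanSpace ℝ (Fin n) → EuclideanSpace ℝ (Fin n))
    (hu_unit : ∀ x ∈ frontier K, ‖u x‖ = 1)
    (hu_normal : ∀ x ∈ frontier K, ∀ y ∈ K, ⟪y - x, u x⟫ ≤ 0) :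
    ∀ x ∈ frontier K, ∀ y ∈ frontier K, ‖u x - u y‖ ≤ ε⁻¹ * ‖x - y‖ := by
  have hKcl : IsClosed K := hsmooth ▸ (hK'cpt.add (isCompact_closedBall _ _)).isClosed
  intro x hx y hy
  subst hsmooth
  exact norm_sub_le_of_isOuterNormal_add_closedBall hε (hKcl.frontier_subset hx)
    (hKcl.frontier_subset hy) (hu_unit x hx) (hu_unit y hy) (hu_normal x hx) (hu_normal y hy)

/-- An ε-smooth convex body (K = K' + εBⁿ) has a 1/ε-Lipschitz spherical image map:
if `u` assigns to each boundary point an outer unit normal, then `u` is Lipschitz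
with constant 1/ε on the boundary of K. -/
theorem spherical_image_lipschitz
    (n : ℕ) (ε : ℝ) (hε : 0 < ε)
    (K K' : Set (EuclideanSpace ℝ (Fin n)))
    (hK'ne : K'.Nonempty) (hK'cpt : IsCompact K') (hK'cvx : Convex ℝ K')
    (hsmooth : K = K' + closedBall (0 : EuclideanSpace ℝ (Fin n)) ε)
    (u : EuclideanSpace ℝ (Fin n) → EuclideanSpace ℝ (Fin n))
    (hu_unit : ∀ x ∈ frontier K, ‖u x‖ = 1)
    (hu_normal : ∀ x ∈ frontier K, ∀ y ∈ K, ⟪y - x, u x⟫ ≤ 0) :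
    ∀ x ∈ frontier K, ∀ y ∈ frontier K, ‖u x - u y‖ ≤ ε⁻¹ * ‖x - y‖ :=
  spherical_image_lipschitz_general n ε hε K K' hK'cpt hsmooth u hu_unit hu_normal
end

section
/- Let ε ∈ (0,1), δ ∈ (0, ε/2), and let K, L ⊂ ℝⁿ be ε-smooth convex bodies with d_H(K,L) ≤ δ. Then the nearest-point projection p : ∂K → ∂L onto the boundary of L is well-defined (every x ∈ ∂K has a unique nearest point on ∂L) and satisfies |p(x) − x| ≤ δ for all x ∈ ∂K. -/
open Metric Set Pointwise

/-!
Let `x ∈ ∂K`. If `ν` is a unit outer normal of `K` at `x`, then `x + tν` is at distance `t` from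
`K`, hence outside `L` once `t > δ`, while some point of `L` lies within `δ` of `x`; the segment
between them crosses `∂L` inside `B(x, t)`. So `d := dist(x, ∂L) ≤ δ`, and the compact set `∂L`
has a nearest point.

For uniqueness, if `x ∉ L` the midpoint of two nearest points lies in `L` strictly closer to `x`,
and the segment from it to `x` would meet `∂L` at distance `< d`. If `x` is interior to `L`, the
ball `B(x, d)` lies in `L` and touches `∂L` at every nearest point `w`, so the outer normal of `L`
at `w` is `v = (w - x)/d`; as `L = L' + εB`, the centre `w - εv = x - (ε - d)v` lies in `L'`.
Two nearest points give two such centres at distance `ε - d` from `x`, and by strict convexity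
their midpoint `m ∈ L'` is strictly closer, so `B(m, ε) ⊆ L` contains a nearest point in its
interior. This needs `d < ε`, which is where `δ < ε` enters.
-/

open scoped RealInnerProductSpace

theorem IsPreconnected.inter_frontier_nonempty {X : Type*} [TopologicalSpace X] {s t : Set X}
    (hs : IsPreconnected s) (hst : (s ∩ t).Nonempty) (hst' : (s \ t).Nonempty) :
    (s ∩ frontier t).Nonempty := by
  by_contra h
  have hint : ∀ w ∈ s, w ∈ closure t → w ∈ interior t :=
    fun w hw hwc => by_contra fun hwi => h ⟨w, hw, hwc, hwi⟩
  obtain ⟨a, has, hat⟩ := hst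
  obtain ⟨b, hbs, hbt⟩ := hst'
  obtain ⟨w, -, hwi, hwc⟩ := hs _ _ isOpen_interior isClosed_closure.isOpen_compl
    (fun w hw => (em (w ∈ closure t)).imp (hint w hw) id)
    ⟨a, has, hint a has (subset_closure hat)⟩
    ⟨b, hbs, fun hbc => hbt (interior_subset (hint b hbs hbc))⟩
  exact hwc (subset_closure (interior_subset hwi))

theorem closedBall_subset_add_closedBall_zero {E : Type*} [SeminormedAddCommGroup E] {s : Set E}
    {p : E} (hp : p ∈ s) (r : ℝ) :
    closedBall p r ⊆ s + closedBall 0 r := by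
  rw [← singleton_add_closedBall_zero]
  exact add_subset_add_right (singleton_subset_iff.2 hp)

section NormedSpace

variable {E : Type*} [NormedAddCommGroup E] [NormedSpace ℝ E]

theorem exists_mem_frontier_dist_le {s : Set E} {x a b : E} {r : ℝ} (ha : a ∈ s) (hb : b ∉ s)
    (har : dist x a ≤ r) (hbr : dist x b ≤ r) : ∃ z ∈ frontier s, dist x z ≤ r := by
  obtain ⟨z, hz, hzs⟩ := (convex_segment a b).isPreconnected.inter_frontier_nonempty
    ⟨a, left_mem_segment ℝ a b, ha⟩ ⟨b, right_mem_segment ℝ a b, hb⟩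
  exact ⟨z, hzs, mem_closedBall'.1 <| (convex_closedBall x r).segment_subset
    (mem_closedBall'.2 har) (mem_closedBall'.2 hbr) hz⟩

theorem ball_infDist_frontier_subset {s : Set E} {x : E} (hx : x ∈ s) :
    ball x (infDist x (frontier s)) ⊆ s := by
  intro w hw
  by_contra hws
  obtain ⟨z, hz, hzx⟩ :=
    exists_mem_frontier_dist_le hx hws (by rw [dist_self]; exact dist_nonneg) le_rfl
  rw [mem_ball'] at hw
  exact (infDist_le_dist_of_mem hz).not_gt (hzx.trans_lt hw)

theorem dist_midpoint_lt_of_dist_eq [StrictConvexSpace ℝ E] {x a b : E} (hab : a ≠ b)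
    (h : dist x a = dist x b) : dist x (midpoint ℝ a b) < dist x a := by
  have hmid : x - midpoint ℝ a b = (1 / 2 : ℝ) • ((x - a) + (x - b)) := by
    rw [midpoint_eq_smul_add, invOf_eq_inv]; module
  rw [dist_eq_norm, hmid, dist_eq_norm]
  rw [dist_eq_norm, dist_eq_norm] at h
  exact (norm_midpoint_lt_iff h).2 fun h' => hab (sub_right_injective h')

end NormedSpace

section InnerProductSpace

variable {E : Type*} [NormedAddCommGroup E] [InnerProductSpace ℝ E]

theorem Convex.exists_unit_inner_le_of_mem_frontier [CompleteSpace E] {s : Set E}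
    (hs : Convex ℝ s) (hs' : (interior s).Nonempty) {y : E} (hy : y ∈ frontier s) :
    ∃ v : E, ‖v‖ = 1 ∧ ∀ z ∈ s, ⟪v, z⟫ ≤ ⟪v, y⟫ := by
  obtain ⟨f, hf0, hf⟩ := geometric_hahn_banach_of_nonempty_interior_point hs hy.2 hs'
  set u := (InnerProductSpace.toDual ℝ E).symm f
  have hu : u ≠ 0 := by simpa [u] using hf0
  refine ⟨‖u‖⁻¹ • u, norm_smul_inv_norm hu, fun z hz => ?_⟩
  simp only [real_inner_smul_left, u, InnerProductSpace.toDual_symm_apply]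
  exact mul_le_mul_of_nonneg_left (hf z hz) (by positivity)

theorem le_dist_add_smul_of_inner_le {x v w : E} (hv : ‖v‖ = 1) (hw : ⟪v, w⟫ ≤ ⟪v, x⟫)
    (t : ℝ) : t ≤ dist (x + t • v) w :=
  calc t = ⟪v, x + t • v⟫ - ⟪v, x⟫ := by
        rw [inner_add_right, real_inner_smul_right, real_inner_self_eq_norm_sq, hv]; ring
    _ ≤ ⟪v, x + t • v - w⟫ := by rw [inner_sub_right]; linarith
    _ ≤ ‖v‖ * ‖x + t • v - w‖ := real_inner_le_norm _ _
    _ = dist (x + t • v) w := by rw [hv, one_mul, dist_eq_norm]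

theorem eq_smul_of_norm_le_inner {u v : E} {r : ℝ} (hv : ‖v‖ = 1) (hu : ‖u‖ ≤ r)
    (hr : r ≤ ⟪v, u⟫) : u = r • v := by
  have hcs : ⟪v, u⟫ ≤ ‖u‖ := by simpa [hv] using real_inner_le_norm v u
  have heq := inner_eq_norm_mul_iff_real.1 (by rw [hv, one_mul]; linarith : ⟪v, u⟫ = ‖v‖ * ‖u‖)
  rw [hv, one_smul, le_antisymm hu (hr.trans hcs)] at heq
  exact heq.symm

theorem sub_smul_mem_of_forall_inner_le {L' : Set E} {ε : ℝ} {v w : E} (hv : ‖v‖ = 1)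
    (hw : w ∈ L' + closedBall 0 ε) (hvw : ∀ z ∈ L' + closedBall 0 ε, ⟪v, z⟫ ≤ ⟪v, w⟫) :
    w - ε • v ∈ L' := by
  obtain ⟨p, hp, e, he, rfl⟩ := hw
  rw [mem_closedBall_zero_iff] at he
  have hεv : ε • v ∈ closedBall (0 : E) ε := by
    rw [mem_closedBall_zero_iff, norm_smul, hv, mul_one,
      Real.norm_of_nonneg ((norm_nonneg e).trans he)]
  have hsupp := hvw _ (add_mem_add hp hεv)
  rw [inner_add_right, inner_add_right, real_inner_smul_right, real_inner_self_eq_norm_sq, hv]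
    at hsupp
  rwa [eq_smul_of_norm_le_inner hv he (by linarith), add_sub_cancel_right]

theorem exists_mem_frontier_dist_le_of_hausdorffDist_lt [CompleteSpace E] {K L : Set E}
    (hK : Convex ℝ K) (hKint : (interior K).Nonempty) (hKc : IsClosed K)
    (hKL : hausdorffEDist K L ≠ ⊤) {x : E} (hx : x ∈ frontier K) {t : ℝ}
    (ht : hausdorffDist K L < t) : ∃ z ∈ frontier L, dist x z ≤ t := by
  have hxK : x ∈ K := frontier_subset_iff_isClosed.2 hKc hx
  obtain ⟨ν, hν, hνK⟩ := hK.exists_unit_inner_le_of_mem_frontier hKint hx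
  obtain ⟨b, hbL, hbx⟩ := (infDist_lt_iff (nonempty_of_hausdorffEDist_ne_top ⟨x, hxK⟩ hKL)).1
    ((infDist_le_hausdorffDist_of_mem hxK hKL).trans_lt ht)
  have hout : x + t • ν ∉ L := by
    intro ha
    rw [hausdorffEDist_comm] at hKL
    rw [hausdorffDist_comm] at ht
    obtain ⟨w, hwK, hw⟩ := (infDist_lt_iff ⟨x, hxK⟩).1
      ((infDist_le_hausdorffDist_of_mem ha hKL).trans_lt ht)
    exact hw.not_ge (le_dist_add_smul_of_inner_le hν (hνK w hwK) t)
  have ht0 : 0 ≤ t := hausdorffDist_nonneg.trans ht.le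
  refine exists_mem_frontier_dist_le hbL hout hbx.le ?_
  rw [dist_self_add_right, norm_smul, hν, mul_one, Real.norm_of_nonneg ht0]

theorem Convex.eq_of_dist_eq_infDist_frontier_of_notMem {s : Set E} (hs : Convex ℝ s)
    (hc : IsClosed s) {x y z : E} (hx : x ∉ s) (hy : y ∈ frontier s) (hz : z ∈ frontier s)
    (hyx : dist x y = infDist x (frontier s)) (hzx : dist x z = infDist x (frontier s)) :
    y = z := by
  by_contra hne
  have hm := hs.midpoint_mem (frontier_subset_iff_isClosed.2 hc hy)
    (frontier_subset_iff_isClosed.2 hc hz)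
  obtain ⟨w, hw, hwx⟩ := exists_mem_frontier_dist_le hm hx le_rfl
    (by rw [dist_self]; exact dist_nonneg)
  have hcloser := dist_midpoint_lt_of_dist_eq hne (hyx.trans hzx.symm)
  linarith [infDist_le_dist_of_mem hw (x := x)]

theorem eq_of_dist_eq_infDist_frontier_of_mem_interior [CompleteSpace E] {L' : Set E} {ε : ℝ}
    (hL' : Convex ℝ L') (hc : IsClosed (L' + closedBall (0 : E) ε)) {x y z : E}
    (hx : x ∈ interior (L' + closedBall 0 ε))
    (hxε : infDist x (frontier (L' + closedBall 0 ε)) < ε)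
    (hy : y ∈ frontier (L' + closedBall 0 ε)) (hz : z ∈ frontier (L' + closedBall 0 ε))
    (hyx : dist x y = infDist x (frontier (L' + closedBall 0 ε)))
    (hzx : dist x z = infDist x (frontier (L' + closedBall 0 ε))) : y = z := by
  set L := L' + closedBall (0 : E) ε
  set d := infDist x (frontier L)
  have hd : 0 < d := hyx ▸ dist_pos.2 fun h => hy.2 (h ▸ hx)
  have hball : closedBall x d ⊆ L := by
    rw [← closure_ball x hd.ne']
    exact closure_minimal (ball_infDist_frontier_subset (interior_subset hx)) hc
  have hcentre : ∀ w ∈ frontier L, dist x w = d →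
      ∃ v : E, ‖v‖ = 1 ∧ w = x + d • v ∧ x - (ε - d) • v ∈ L' := by
    intro w hw hwx
    obtain ⟨v, hv, hvL⟩ :=
      (hL'.add (convex_closedBall 0 ε)).exists_unit_inner_le_of_mem_frontier ⟨x, hx⟩ hw
    have hxv : x + d • v ∈ L := hball <| by
      rw [mem_closedBall, dist_self_add_left, norm_smul, hv, mul_one, Real.norm_of_nonneg hd.le]
    have hwv : w - x = d • v := by
      refine eq_smul_of_norm_le_inner hv (by rw [← dist_eq_norm, dist_comm, hwx]) ?_
      have := hvL _ hxv
      rw [inner_add_right, real_inner_smul_right, real_inner_self_eq_norm_sq, hv] at this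
      rw [inner_sub_right]; linarith
    refine ⟨v, hv, by rw [← hwv]; abel, ?_⟩
    convert sub_smul_mem_of_forall_inner_le hv (frontier_subset_iff_isClosed.2 hc hw) hvL
      using 1
    rw [eq_add_of_sub_eq' hwv]; module
  by_contra hne
  obtain ⟨v₁, hv₁, rfl, hc₁⟩ := hcentre y hy hyx
  obtain ⟨v₂, hv₂, rfl, hc₂⟩ := hcentre _ hz hzx
  have hεd : 0 < ε - d := sub_pos.2 hxε
  have hdist : ∀ v : E, ‖v‖ = 1 → dist x (x - (ε - d) • v) = ε - d := fun v hv => by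
    rw [dist_self_sub_right, norm_smul, hv, mul_one, Real.norm_of_nonneg hεd.le]
  have hcloser := dist_midpoint_lt_of_dist_eq
    (fun h => hne (by rw [smul_right_injective E hεd.ne' (sub_right_injective h)]))
    ((hdist v₁ hv₁).trans (hdist v₂ hv₂).symm)
  set m := midpoint ℝ (x - (ε - d) • v₁) (x - (ε - d) • v₂)
  have hmL : ball m ε ⊆ interior L := interior_maximal (ball_subset_closedBall.trans
    (closedBall_subset_add_closedBall_zero (hL'.midpoint_mem hc₁ hc₂) ε)) isOpen_ball
  refine hy.2 (hmL (mem_ball'.2 ?_))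
  linarith [dist_triangle m x (x + d • v₁), dist_comm m x, hdist v₁ hv₁]

theorem eq_of_dist_eq_infDist_frontier_add_closedBall [CompleteSpace E] {L' : Set E} {ε : ℝ}
    (hL' : Convex ℝ L') (hc : IsClosed (L' + closedBall (0 : E) ε)) {x y z : E}
    (hxε : infDist x (frontier (L' + closedBall 0 ε)) < ε)
    (hy : y ∈ frontier (L' + closedBall 0 ε)) (hz : z ∈ frontier (L' + closedBall 0 ε))
    (hyx : dist x y = infDist x (frontier (L' + closedBall 0 ε)))
    (hzx : dist x z = infDist x (frontier (L' + closedBall 0 ε))) : y = z := by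
  by_cases hxi : x ∈ interior (L' + closedBall 0 ε)
  · exact eq_of_dist_eq_infDist_frontier_of_mem_interior hL' hc hxi hxε hy hz hyx hzx
  by_cases hxL : x ∈ L' + closedBall 0 ε
  · have hxf : infDist x (frontier (L' + closedBall 0 ε)) = 0 :=
      infDist_zero_of_mem (hc.frontier_eq ▸ ⟨hxL, hxi⟩)
    rw [hxf, dist_eq_zero] at hyx hzx
    exact hyx.symm.trans hzx
  · exact (hL'.add (convex_closedBall 0 ε)).eq_of_dist_eq_infDist_frontier_of_notMem hc hxL
      hy hz hyx hzx

end InnerProductSpace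

/-- For ε-smooth convex bodies K, L with Hausdorff distance at most δ < ε/2, every point
x of ∂K has a unique nearest point on ∂L, and this nearest point is at distance at most δ
from x. -/
theorem nearest_point_projection_wellDefined
    (n : ℕ) (ε δ : ℝ) (hε : ε ∈ Set.Ioo (0:ℝ) 1) (hδ : δ ∈ Set.Ioo (0:ℝ) (ε/2))
    (K L : Set (EuclideanSpace ℝ (Fin n)))
    (hKsmooth : ∃ K' : Set (EuclideanSpace ℝ (Fin n)), K'.Nonempty ∧ IsCompact K' ∧
      Convex ℝ K' ∧ K = K' + closedBall (0 : EuclideanSpace ℝ (Fin n)) ε)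
    (hLsmooth : ∃ L' : Set (EuclideanSpace ℝ (Fin n)), L'.Nonempty ∧ IsCompact L' ∧
      Convex ℝ L' ∧ L = L' + closedBall (0 : EuclideanSpace ℝ (Fin n)) ε)
    (hd : hausdorffDist K L ≤ δ) :
    ∀ x ∈ frontier K, ∃ y,
      (y ∈ frontier L ∧ dist x y = infDist x (frontier L) ∧ dist x y ≤ δ) ∧
      ∀ z, z ∈ frontier L ∧ dist x z = infDist x (frontier L) → z = y := by
  obtain ⟨hε, -⟩ := hε
  obtain ⟨-, hδε⟩ := hδ
  obtain ⟨K', ⟨k, hk⟩, hK'c, hK'v, rfl⟩ := hKsmooth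
  obtain ⟨L', hL'ne, hL'c, hL'v, rfl⟩ := hLsmooth
  have hKc := hK'c.add (isCompact_closedBall 0 ε)
  have hLc := hL'c.add (isCompact_closedBall 0 ε)
  have hKint : (interior (K' + closedBall 0 ε)).Nonempty := ⟨k, mem_interior_iff_mem_nhds.2 <|
    Filter.mem_of_superset (closedBall_mem_nhds k hε) (closedBall_subset_add_closedBall_zero hk ε)⟩
  have hKL := hausdorffEDist_ne_top_of_nonempty_of_bounded (hKint.mono interior_subset)
    (hL'ne.add (nonempty_closedBall.2 hε.le)) hKc.isBounded hLc.isBounded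
  intro x hx
  have hnear : ∀ t, δ < t → ∃ z ∈ frontier (L' + closedBall 0 ε), dist x z ≤ t := fun t ht =>
    exists_mem_frontier_dist_le_of_hausdorffDist_lt (hK'v.add (convex_closedBall 0 ε)) hKint
      hKc.isClosed hKL hx (hd.trans_lt ht)
  obtain ⟨z₀, hz₀, -⟩ := hnear (δ + 1) (lt_add_one δ)
  obtain ⟨y, hy, hyx⟩ := (hLc.of_isClosed_subset isClosed_frontier
    (frontier_subset_iff_isClosed.2 hLc.isClosed)).exists_infDist_eq_dist ⟨z₀, hz₀⟩ x
  have hxδ : infDist x (frontier (L' + closedBall 0 ε)) ≤ δ :=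
    le_of_forall_gt_imp_ge_of_dense fun t ht => by
      obtain ⟨z, hz, hzx⟩ := hnear t ht
      exact (infDist_le_dist_of_mem hz).trans hzx
  refine ⟨y, ⟨hy, hyx.symm, hyx ▸ hxδ⟩, fun z ⟨hz, hzx⟩ => ?_⟩
  exact eq_of_dist_eq_infDist_frontier_add_closedBall hL'v hLc.isClosed (by linarith) hz hy hzx
    hyx.symm
end

section
/- Let ε ∈ (0,1), δ ∈ (0, ε/2), and let K, L ⊂ ℝⁿ be ε-smooth convex bodies with d_H(K,L) ≤ δ. Then the nearest-point projection map p : ∂K → ∂L, x ↦ p(∂L, x), is bijective. -/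
/-!
Write `K = K' + εB` and `L = L' + εB`. Minkowski cancellation for compact convex sets gives
`d_H(K', L') ≤ δ`, and `∂K`, `∂L` are the level sets `d(·, K') = ε`, `d(·, L') = ε`. For `x ∈ ∂K`
we have `d(x, L') ≥ ε - δ > 0`, and the point of `∂L` nearest to `x` is the point at distance `ε`
from `c` on the ray from the nearest point `c ∈ L'` of `x` through `x`.

Surjectivity: on the ray from `c` through `y ∈ ∂L` the function `d(·, K')` is `≤ δ < ε` at `c` and
`≥ 2ε - δ ≥ ε` at distance `2ε`, so it takes the value `ε`. Injectivity: two points of `∂K` with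
the same image lie on one ray from `c`, along which the convex function `d(·, K')`, being `< ε` at
`c`, takes the value `ε` only once.
-/

open Metric Set Pointwise RealInnerProductSpace

theorem ConvexOn.eq_of_apply_add_smul_eq {E : Type*} [AddCommGroup E] [Module ℝ E]
    {f : E → ℝ} (hf : ConvexOn ℝ univ f) {c v : E} {r s t : ℝ} (hc : f c < r)
    (hs : f (c + s • v) = r) (ht : f (c + t • v) = r) (hs0 : 0 ≤ s) (ht0 : 0 ≤ t) :
    s = t := by
  wlog hst : s < t generalizing s t
  · rcases (not_lt.1 hst).lt_or_eq with h | h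
    exacts [(this ht hs ht0 hs0 h).symm, h.symm]
  have hs_pos : 0 < s := hs0.lt_of_ne <| by rintro rfl; rw [zero_smul, add_zero] at hs; linarith
  have hmem : c + s • v ∈ openSegment ℝ c (c + t • v) := by
    rw [openSegment_eq_image']
    have ht_pos := hs_pos.trans hst
    refine ⟨s / t, ⟨div_pos hs_pos ht_pos, (div_lt_one ht_pos).2 hst⟩, ?_⟩
    simp only [add_sub_cancel_left, smul_smul, div_mul_cancel₀ _ ht_pos.ne']
  have := hf.lt_right_of_left_lt (mem_univ _) (mem_univ _) hmem (hs ▸ hc)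
  linarith

theorem sub_eq_smul_of_dist_add_dist_eq {E : Type*} [NormedAddCommGroup E] [NormedSpace ℝ E]
    [StrictConvexSpace ℝ E] {x y w : E} (h : dist x y + dist y w = dist x w) :
    y - x = (dist x y / dist x w) • (w - x) := by
  obtain ⟨θ, hθ, rfl⟩ := dist_add_dist_eq_iff.1 h
  rcases eq_or_ne x w with rfl | hxw
  · simp
  rw [dist_comm, dist_lineMap_left, Real.norm_of_nonneg hθ.1,
    mul_div_cancel_right₀ _ (dist_ne_zero.2 hxw), AffineMap.lineMap_apply, vsub_eq_sub,
    vadd_eq_add, add_sub_cancel_right]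

section NearestPoint

variable {E : Type*} [NormedAddCommGroup E] [InnerProductSpace ℝ E] {A : Set E} {a c c' z : E}

theorem inner_sub_nonpos_of_infDist_eq_dist (hA : Convex ℝ A) (hc : c ∈ A)
    (hz : infDist z A = dist z c) (ha : a ∈ A) : ⟪z - c, a - c⟫ ≤ 0 := by
  refine (norm_eq_iInf_iff_real_inner_le_zero hA hc).1 ?_ a ha
  simpa only [infDist_eq_iInf, dist_eq_norm] using hz.symm

theorem eq_of_infDist_eq_dist (hA : Convex ℝ A) (hc : c ∈ A) (hc' : c' ∈ A)
    (hz : infDist z A = dist z c) (hz' : infDist z A = dist z c') : c = c' := by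
  have h := inner_sub_nonpos_of_infDist_eq_dist hA hc hz hc'
  have h' := inner_sub_nonpos_of_infDist_eq_dist hA hc' hz' hc
  -- the two variational inequalities add up to `‖c' - c‖² ≤ 0`
  have hsum : ⟪c' - c, c' - c⟫ ≤ 0 := by
    have : ⟪c' - c, c' - c⟫ = ⟪z - c, c' - c⟫ + ⟪z - c', c - c'⟫ := by
      rw [← neg_sub c' c, inner_neg_right, ← sub_eq_add_neg, ← inner_sub_left]
      congr 1; abel
    linarith
  rw [real_inner_self_nonpos, sub_eq_zero] at hsum
  exact hsum.symm

theorem infDist_add_smul_sub_eq (hA : Convex ℝ A) (hc : c ∈ A)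
    (hz : infDist z A = dist z c) {t : ℝ} (ht : 0 ≤ t) :
    infDist (c + t • (z - c)) A = t * infDist z A := by
  have hdist : dist (c + t • (z - c)) c = t * dist z c := by
    rw [dist_eq_norm, add_sub_cancel_left, norm_smul, Real.norm_of_nonneg ht, dist_eq_norm]
  refine le_antisymm (hz ▸ hdist ▸ infDist_le_dist_of_mem hc) ((le_infDist ⟨c, hc⟩).2 ?_)
  intro a ha
  have hinner : 0 ≤ ⟪t • (z - c), c - a⟫ := by
    rw [real_inner_smul_left, ← neg_sub a c, inner_neg_right]
    exact mul_nonneg ht (neg_nonneg.2 (inner_sub_nonpos_of_infDist_eq_dist hA hc hz ha))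
  have hsq : ‖t • (z - c)‖ ^ 2 ≤ ‖t • (z - c) + (c - a)‖ ^ 2 := by
    rw [norm_add_sq_real]; nlinarith [norm_nonneg (c - a)]
  rw [hz, ← hdist, dist_eq_norm, dist_eq_norm, add_sub_cancel_left,
    show c + t • (z - c) - a = t • (z - c) + (c - a) by abel]
  exact (sq_le_sq₀ (norm_nonneg _) (norm_nonneg _)).1 hsq

theorem convexOn_infDist (hA : Convex ℝ A) : ConvexOn ℝ univ (infDist · A) := by
  refine ⟨convex_univ, fun x _ y _ a b ha hb hab => ?_⟩
  rcases A.eq_empty_or_nonempty with rfl | hne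
  · simp
  refine le_of_forall_pos_le_add fun η hη => ?_
  obtain ⟨x', hx', hxx'⟩ := (infDist_lt_iff hne).1 (lt_add_of_pos_right (infDist x A) hη)
  obtain ⟨y', hy', hyy'⟩ := (infDist_lt_iff hne).1 (lt_add_of_pos_right (infDist y A) hη)
  calc infDist (a • x + b • y) A ≤ dist (a • x + b • y) (a • x' + b • y') :=
        infDist_le_dist_of_mem (hA hx' hy' ha hb hab)
    _ ≤ a * dist x x' + b * dist y y' := by
        rw [dist_eq_norm, dist_eq_norm, dist_eq_norm,
          show a • x + b • y - (a • x' + b • y') = a • (x - x') + b • (y - y') by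
            module]
        refine (norm_add_le _ _).trans_eq ?_
        rw [norm_smul, norm_smul, Real.norm_of_nonneg ha, Real.norm_of_nonneg hb]
    _ ≤ a * (infDist x A + η) + b * (infDist y A + η) := by gcongr
    _ = a • infDist x A + b • infDist y A + η := by
        simp only [smul_eq_mul]; linear_combination η * hab

end NearestPoint

section CompactConvex

variable {E : Type*} [NormedAddCommGroup E] [InnerProductSpace ℝ E] {A : Set E} {c z : E}
  {ε : ℝ}  (hAc : IsCompact A) (hA : Convex ℝ A)
include hAc hA

theorem frontier_add_closedBall_eq (hε : 0 < ε) :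
    frontier (A + closedBall 0 ε) = {z | infDist z A = ε} := by
  rw [hAc.add_closedBall_zero hε.le]
  ext z
  refine ⟨fun hz => ?_, fun (hz : infDist z A = ε) => ?_⟩
  · show infDist z A = ε
    rw [infDist, frontier_cthickening_subset A hz, ENNReal.toReal_ofReal hε.le]
  rcases A.eq_empty_or_nonempty with rfl | hne
  · rw [infDist_empty] at hz; exact absurd hz hε.ne
  obtain ⟨c, hc, hzc⟩ := hAc.exists_infDist_eq_dist hne z
  rw [frontier_eq_closure_inter_closure, isClosed_cthickening.closure_eq]
  refine ⟨mem_cthickening_of_dist_le z c ε A hc (hzc ▸ hz).le, ?_⟩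
  have hray : Filter.Tendsto (fun t : ℝ => c + t • (z - c)) (nhdsWithin 1 (Ioi 1)) (nhds z) :=
    ((continuous_const.add (continuous_id.smul continuous_const)).tendsto' 1 z
      (by simp)).mono_left nhdsWithin_le_nhds
  refine mem_closure_of_tendsto hray ?_
  filter_upwards [self_mem_nhdsWithin] with t (ht : 1 < t) hmem
  have hle := ENNReal.toReal_le_of_le_ofReal hε.le (mem_cthickening_iff.1 hmem)
  rw [← infDist, infDist_add_smul_sub_eq hA hc hzc (by linarith), hz] at hle
  nlinarith

theorem eq_add_smul_of_infDist_eq_of_dist_le (hc : c ∈ A) (hzc : infDist z A = dist z c)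
    (hz : 0 < infDist z A) {w : E} (hw : infDist w A = ε)
    (hzw : dist z w ≤ |infDist z A - ε|) : w = c + (ε / infDist z A) • (z - c) := by
  have hcw : ε ≤ dist c w := hw ▸ dist_comm w c ▸ infDist_le_dist_of_mem hc
  rcases le_total (infDist z A) ε with hzε | hεz
  · -- `z` lies on the segment from `c` to `w`
    rw [abs_of_nonpos (sub_nonpos.2 hzε)] at hzw
    have hcz : dist c z = infDist z A := by rw [dist_comm, hzc]
    have hcwε : dist c w = ε := le_antisymm (by linarith [dist_triangle c z w]) hcw
    have hcol : dist c z + dist z w = dist c w := by linarith [dist_triangle c z w]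
    have hzc' := sub_eq_smul_of_dist_add_dist_eq hcol
    rw [hcz, hcwε] at hzc'
    rw [hzc', smul_smul, div_mul_div_cancel₀ hz.ne', div_self (hz.trans_le hzε).ne', one_smul,
      add_sub_cancel]
  · -- `w` lies on the segment from `c` to `z`, and `c` is also the nearest point to `w`
    rw [abs_of_nonneg (sub_nonneg.2 hεz)] at hzw
    obtain ⟨c', hc', hwc'⟩ := hAc.exists_infDist_eq_dist ⟨c, hc⟩ w
    have hzc' : infDist z A = dist z c' :=
      le_antisymm (infDist_le_dist_of_mem hc') (by linarith [dist_triangle z w c'])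
    obtain rfl := eq_of_infDist_eq_dist hA hc hc' hzc hzc'
    have hcol : dist c w + dist w z = dist c z := by
      linarith [dist_triangle c w z, dist_comm c w, dist_comm w z, dist_comm c z]
    have hwc := sub_eq_smul_of_dist_add_dist_eq hcol
    rw [dist_comm c w, ← hwc', hw, dist_comm, ← hzc] at hwc
    exact eq_add_of_sub_eq' hwc

theorem eq_add_smul_of_dist_eq_infDist_levelSet (hc : c ∈ A) (hzc : infDist z A = dist z c)
    (hz : 0 < infDist z A) {w : E} (hw : infDist w A = ε)
    (hzw : dist z w = infDist z {y | infDist y A = ε}) :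
    w = c + (ε / infDist z A) • (z - c) := by
  refine eq_add_smul_of_infDist_eq_of_dist_le hAc hA hc hzc hz hw (hzw.trans_le ?_)
  have hε : 0 ≤ ε := hw ▸ infDist_nonneg
  set w₀ := c + (ε / infDist z A) • (z - c)
  have hw₀ : infDist w₀ A = ε := by
    rw [infDist_add_smul_sub_eq hA hc hzc (by positivity), div_mul_cancel₀ _ hz.ne']
  calc infDist z {y | infDist y A = ε} ≤ dist z w₀ := infDist_le_dist_of_mem hw₀
    _ = |infDist z A - ε| := by
      rw [dist_comm, dist_eq_norm, show w₀ - z = (ε / infDist z A - 1) • (z - c) by module,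
        norm_smul, Real.norm_eq_abs, ← dist_eq_norm, ← hzc,
        show infDist z A - ε = -((ε / infDist z A - 1) * infDist z A) by field_simp; ring,
        abs_neg, abs_mul, abs_of_pos hz]

theorem exists_mem_closedBall_infDist_le (hε : 0 ≤ ε) (x : E) :
    ∃ y ∈ closedBall x ε, infDist x A ≤ infDist y (A + closedBall 0 ε) := by
  rcases A.eq_empty_or_nonempty with rfl | hne
  · exact ⟨x, mem_closedBall_self hε, by simp⟩
  rcases (infDist_nonneg (x := x) (s := A)).eq_or_lt with h0 | hpos
  · exact ⟨x, mem_closedBall_self hε, h0 ▸ infDist_nonneg⟩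
  have hlow : ∀ y, infDist y A - ε ≤ infDist y (A + closedBall 0 ε) := fun y =>
    (le_infDist (hne.add (nonempty_closedBall.2 hε))).2 <| by
      rintro _ ⟨a, ha, v, hv, rfl⟩
      rw [mem_closedBall_zero_iff] at hv
      dsimp only
      linarith [infDist_le_dist_of_mem ha (x := y), dist_triangle y (a + v) a,
        dist_self_add_left v a]
  -- push `x` a distance `ε` further away from its nearest point `c`
  obtain ⟨c, hc, hxc⟩ := hAc.exists_infDist_eq_dist hne x
  refine ⟨c + (1 + ε / infDist x A) • (x - c), ?_, ?_⟩
  · rw [mem_closedBall, dist_eq_norm, show c + (1 + ε / infDist x A) • (x - c) - x =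
      (ε / infDist x A) • (x - c) by module, norm_smul, ← dist_eq_norm, ← hxc,
      Real.norm_of_nonneg (by positivity), div_mul_cancel₀ _ hpos.ne']
  · have := hlow (c + (1 + ε / infDist x A) • (x - c))
    rwa [infDist_add_smul_sub_eq hA hc hxc (by positivity), add_mul, one_mul,
      div_mul_cancel₀ _ hpos.ne', add_sub_cancel_right] at this

theorem hausdorffDist_le_hausdorffDist_add_closedBall {B : Set E} (hBc : IsCompact B)
    (hB : Convex ℝ B) (hAne : A.Nonempty) (hBne : B.Nonempty) (hε : 0 ≤ ε) :
    hausdorffDist A B ≤ hausdorffDist (A + closedBall 0 ε) (B + closedBall 0 ε) := by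
  have hfin : hausdorffEDist (A + closedBall 0 ε) (B + closedBall 0 ε) ≠ ⊤ :=
    hausdorffEDist_ne_top_of_nonempty_of_bounded (hAne.add (nonempty_closedBall.2 hε))
      (hBne.add (nonempty_closedBall.2 hε)) (hAc.isBounded.add isBounded_closedBall)
      (hBc.isBounded.add isBounded_closedBall)
  have hmem {S : Set E} {x y : E} (hx : x ∈ S) (hy : y ∈ closedBall x ε) :
      y ∈ S + closedBall 0 ε :=
    ⟨x, hx, y - x, by rwa [mem_closedBall_zero_iff, ← dist_eq_norm], add_sub_cancel x y⟩
  refine hausdorffDist_le_of_infDist hausdorffDist_nonneg (fun a ha => ?_) (fun b hb => ?_)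
  · obtain ⟨y, hy, hay⟩ := exists_mem_closedBall_infDist_le hBc hB hε a
    exact hay.trans (infDist_le_hausdorffDist_of_mem (hmem ha hy) hfin)
  · obtain ⟨y, hy, hby⟩ := exists_mem_closedBall_infDist_le hAc hA hε b
    rw [hausdorffDist_comm]
    rw [hausdorffEDist_comm] at hfin
    exact hby.trans (infDist_le_hausdorffDist_of_mem (hmem hb hy) hfin)

end CompactConvex

section Projection

variable {E : Type*} [NormedAddCommGroup E] [InnerProductSpace ℝ E]

def IsNearestPointProjection (p : E → E) (X Y : Set E) : Prop :=
  ∀ x ∈ X, p x ∈ Y ∧ dist x (p x) = infDist x Y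

namespace IsNearestPointProjection

variable {K L : Set E} {ε δ : ℝ} {p : E → E}
  (hp : IsNearestPointProjection p {x | infDist x K = ε} {y | infDist y L = ε})
  (hLc : IsCompact L) (hL : Convex ℝ L) (hLK : ∀ z, infDist z K ≤ infDist z L + δ)
  (hδε : δ < ε)
include hp hLc hL hLK hδε

theorem apply_eq_add_smul {x c : E} (hx : infDist x K = ε) (hc : c ∈ L)
    (hxc : infDist x L = dist x c) : p x = c + (ε / infDist x L) • (x - c) :=
  eq_add_smul_of_dist_eq_infDist_levelSet hLc hL hc hxc (by linarith [hLK x]) (hp x hx).1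
    (hp x hx).2

theorem exists_eq_add_smul_apply_sub (hε : 0 < ε) (hLne : L.Nonempty) ⦃x : E⦄
    (hx : infDist x K = ε) :
    ∃ c ∈ L, infDist (p x) L = dist (p x) c ∧ x = c + (infDist x L / ε) • (p x - c) := by
  have hxL : 0 < infDist x L := by linarith [hLK x]
  obtain ⟨c, hc, hxc⟩ := hLc.exists_infDist_eq_dist hLne x
  have hpx := hp.apply_eq_add_smul hLc hL hLK hδε hx hc hxc
  refine ⟨c, hc, ?_, ?_⟩
  · rw [(hp x hx).1, hpx, dist_eq_norm, add_sub_cancel_left, norm_smul, ← dist_eq_norm, ← hxc,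
      Real.norm_of_nonneg (by positivity), div_mul_cancel₀ _ hxL.ne']
  · rw [hpx, add_sub_cancel_left, smul_smul, div_mul_div_cancel₀ hε.ne', div_self hxL.ne',
      one_smul, add_sub_cancel]

theorem injOn (hK : Convex ℝ K) (hLne : L.Nonempty) : InjOn p {x | infDist x K = ε} := by
  intro x₁ (hx₁ : infDist x₁ K = ε) x₂ (hx₂ : infDist x₂ K = ε) hpx
  have hLK' : ∀ c ∈ L, infDist c K < ε := fun c hc => by
    linarith [hLK c, infDist_zero_of_mem hc (x := c)]
  have hε : 0 < ε := infDist_nonneg.trans_lt (hLK' _ hLne.some_mem)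
  have hray := hp.exists_eq_add_smul_apply_sub hLc hL hLK hδε hε hLne
  obtain ⟨c₁, hc₁, hyc₁, hx₁c⟩ := hray hx₁
  obtain ⟨c₂, hc₂, hyc₂, hx₂c⟩ := hray hx₂
  rw [← hpx] at hyc₂ hx₂c
  obtain rfl := eq_of_infDist_eq_dist hL hc₁ hc₂ hyc₁ hyc₂
  have := (convexOn_infDist hK).eq_of_apply_add_smul_eq (hLK' c₁ hc₁)
    (hx₁c ▸ hx₁) (hx₂c ▸ hx₂)
    (div_nonneg infDist_nonneg hε.le) (div_nonneg infDist_nonneg hε.le)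
  rw [hx₁c, hx₂c, this]

theorem surjOn (hLne : L.Nonempty) (hKL : ∀ z, infDist z L ≤ infDist z K + δ) :
    SurjOn p {x | infDist x K = ε} {y | infDist y L = ε} := by
  intro y (hy : infDist y L = ε)
  obtain ⟨c, hc, hyc⟩ := hLc.exists_infDist_eq_dist hLne y
  set g : ℝ → ℝ := fun t => infDist (c + t • (y - c)) K
  have hg : Continuous g := (continuous_infDist_pt K).comp (by fun_prop)
  have hg0 : g 0 < ε := by
    simp only [g, zero_smul, add_zero]
    linarith [hLK c, infDist_zero_of_mem hc (x := c)]
  have hg2 : ε ≤ g 2 := by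
    have := hKL (c + (2 : ℝ) • (y - c))
    rw [infDist_add_smul_sub_eq hL hc hyc zero_le_two, hy] at this
    linarith
  obtain ⟨t, ht, hgt⟩ := intermediate_value_Icc zero_le_two hg.continuousOn ⟨hg0.le, hg2⟩
  have ht0 : t ≠ 0 := by rintro rfl; exact hg0.ne hgt
  have hε : 0 < ε := infDist_nonneg.trans_lt hg0
  have hxL : infDist (c + t • (y - c)) L = t * ε := by
    rw [infDist_add_smul_sub_eq hL hc hyc ht.1, hy]
  have hxc : infDist (c + t • (y - c)) L = dist (c + t • (y - c)) c := by
    rw [hxL, dist_eq_norm, add_sub_cancel_left, norm_smul, Real.norm_of_nonneg ht.1,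
      ← dist_eq_norm, ← hyc, hy]
  refine ⟨c + t • (y - c), hgt, ?_⟩
  rw [hp.apply_eq_add_smul hLc hL hLK hδε hgt hc hxc, hxL, add_sub_cancel_left, smul_smul,
    mul_comm t ε, ← div_div, div_self hε.ne', one_div, inv_mul_cancel₀ ht0, one_smul,
    add_sub_cancel]

theorem bijOn (hK : Convex ℝ K) (hLne : L.Nonempty)
    (hKL : ∀ z, infDist z L ≤ infDist z K + δ) :
    BijOn p {x | infDist x K = ε} {y | infDist y L = ε} :=
  ⟨fun x hx => (hp x hx).1, hp.injOn hLc hL hLK hδε hK hLne,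
    hp.surjOn hLc hL hLK hδε hLne hKL⟩

end IsNearestPointProjection

end Projection

/-- For ε-smooth convex bodies K, L with Hausdorff distance at most δ < ε/2, the
nearest-point projection p : ∂K → ∂L onto the boundary of L is a bijection. -/
theorem nearest_point_projection_bijective
    (n : ℕ) (ε δ : ℝ) (hε : ε ∈ Set.Ioo (0:ℝ) 1) (hδ : δ ∈ Set.Ioo (0:ℝ) (ε/2))
    (K L : Set (EuclideanSpace ℝ (Fin n)))
    (hKsmooth : ∃ K' : Set (EuclideanSpace ℝ (Fin n)), K'.Nonempty ∧ IsCompact K' ∧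
      Convex ℝ K' ∧ K = K' + closedBall (0 : EuclideanSpace ℝ (Fin n)) ε)
    (hLsmooth : ∃ L' : Set (EuclideanSpace ℝ (Fin n)), L'.Nonempty ∧ IsCompact L' ∧
      Convex ℝ L' ∧ L = L' + closedBall (0 : EuclideanSpace ℝ (Fin n)) ε)
    (hd : hausdorffDist K L ≤ δ)
    (p : EuclideanSpace ℝ (Fin n) → EuclideanSpace ℝ (Fin n))
    (hp : ∀ x ∈ frontier K, p x ∈ frontier L ∧ dist x (p x) = infDist x (frontier L)) :
    Set.BijOn p (frontier K) (frontier L) := by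
  obtain ⟨K', hK'ne, hK'c, hK', rfl⟩ := hKsmooth
  obtain ⟨L', hL'ne, hL'c, hL', rfl⟩ := hLsmooth
  have hH : hausdorffDist K' L' ≤ δ :=
    (hausdorffDist_le_hausdorffDist_add_closedBall hK'c hK' hL'c hL' hK'ne hL'ne hε.1.le).trans hd
  have hfin : hausdorffEDist K' L' ≠ ⊤ :=
    hausdorffEDist_ne_top_of_nonempty_of_bounded hK'ne hL'ne hK'c.isBounded hL'c.isBounded
  have hKL (z) : infDist z L' ≤ infDist z K' + δ :=
    (infDist_le_infDist_add_hausdorffDist hfin).trans (by gcongr)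
  have hLK (z) : infDist z K' ≤ infDist z L' + δ :=
    (infDist_le_infDist_add_hausdorffDist (by rwa [hausdorffEDist_comm])).trans
      (by rw [hausdorffDist_comm]; gcongr)
  change IsNearestPointProjection p _ _ at hp
  rw [frontier_add_closedBall_eq hK'c hK' hε.1, frontier_add_closedBall_eq hL'c hL' hε.1]
    at hp ⊢
  exact hp.bijOn hL'c hL' hLK (by linarith [hδ.1, hδ.2]) hK' hL'ne hKL
end

section
/- Let ε ∈ (0,1), δ ∈ (0, ε/2), and let K, L ⊂ ℝⁿ be ε-smooth convex bodies with d_H(K,L) ≤ δ. Then for every x ∈ ∂K, |u_L(p(x)) − u_K(x)| ≤ 2√(δ/ε), where p(x) is the nearest point to x on ∂L and u_K, u_L are the outer unit normal maps. -/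
open Metric Set Pointwise
open scoped RealInnerProductSpace

theorem infDist_frontier_le_dist_of_mem_of_notMem {E : Type*} [SeminormedAddCommGroup E]
    [NormedSpace ℝ E] {s : Set E} {x y : E} (hx : x ∈ s) (hy : y ∉ s) :
    infDist x (frontier s) ≤ dist x y := by
  obtain ⟨w, hw, hws⟩ := (convex_segment x y).isPreconnected.inter_frontier_nonempty
    ⟨x, left_mem_segment ℝ x y, hx⟩ ⟨y, right_mem_segment ℝ x y, hy⟩
  calc infDist x (frontier s) ≤ dist x w := infDist_le_dist_of_mem hws
    _ ≤ dist x y := by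
      rw [← dist_add_dist_of_mem_segment hw]
      exact le_add_of_nonneg_right dist_nonneg

section InnerProductSpace

variable {E : Type*} [NormedAddCommGroup E] [InnerProductSpace ℝ E]

theorem inner_sub_le_of_hausdorffDist_le {K L : Set E} {q v y : E} {δ : ℝ} (hv : ‖v‖ = 1)
    (hL : ∀ z ∈ L, ⟪z - q, v⟫ ≤ 0) (hKL : hausdorffEDist K L ≠ ⊤)
    (hd : hausdorffDist K L ≤ δ) (hy : y ∈ K) : ⟪y - q, v⟫ ≤ δ := by
  refine le_of_forall_gt_imp_ge_of_dense fun r hr => ?_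
  obtain ⟨z, hz, hyz⟩ := exists_dist_lt_of_hausdorffDist_lt hy (hd.trans_lt hr) hKL
  calc ⟪y - q, v⟫ = ⟪y - z, v⟫ + ⟪z - q, v⟫ := by rw [← inner_add_left, sub_add_sub_cancel]
    _ ≤ ‖y - z‖ * ‖v‖ + 0 := add_le_add (real_inner_le_norm _ _) (hL z hz)
    _ ≤ r := by rw [hv, mul_one, add_zero, ← dist_eq_norm]; exact hyz.le

theorem infDist_frontier_le_of_hausdorffDist_le {K L : Set E} {x u : E} {δ : ℝ} (hu : ‖u‖ = 1)
    (hK : ∀ y ∈ K, ⟪y - x, u⟫ ≤ 0) (hx : x ∈ K) (hKL : hausdorffEDist K L ≠ ⊤)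
    (hd : hausdorffDist K L ≤ δ) : infDist x (frontier L) ≤ δ := by
  refine le_of_forall_gt_imp_ge_of_dense fun r hr => ?_
  by_cases hxL : x ∈ L
  · have hr0 : 0 < r := hausdorffDist_nonneg.trans_lt (hd.trans_lt hr)
    have hyL : x + r • u ∉ L := fun hyL => by
      have := inner_sub_le_of_hausdorffDist_le hu hK
        (by rwa [hausdorffEDist_comm]) (hausdorffDist_comm.trans_le hd) hyL
      rw [add_sub_cancel_left, real_inner_smul_left, real_inner_self_eq_norm_sq, hu] at this
      linarith
    calc infDist x (frontier L) ≤ dist x (x + r • u) :=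
          infDist_frontier_le_dist_of_mem_of_notMem hxL hyL
      _ = r := by simp [norm_smul, hu, hr0.le]
  · obtain ⟨z, hz, hxz⟩ := exists_dist_lt_of_hausdorffDist_lt hx (hd.trans_lt hr) hKL
    calc infDist x (frontier L) = infDist x (frontier Lᶜ) := by rw [frontier_compl]
      _ ≤ dist x z := infDist_frontier_le_dist_of_mem_of_notMem hxL (not_not.2 hz)
      _ ≤ r := hxz.le

theorem sub_smul_mem_of_forall_inner_nonpos {K : Set E} {x u : E} {ε : ℝ} (hu : ‖u‖ = 1)
    (hx : x ∈ K + closedBall 0 ε) (hK : ∀ y ∈ K + closedBall 0 ε, ⟪y - x, u⟫ ≤ 0) :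
    x - ε • u ∈ K := by
  obtain ⟨k, hk, w, hw, rfl⟩ := hx
  rw [mem_closedBall_zero_iff] at hw
  have hε : 0 ≤ ε := (norm_nonneg w).trans hw
  have hεu : ‖ε • u‖ = ε := by rw [norm_smul, hu, mul_one, Real.norm_of_nonneg hε]
  have hwu : ε ≤ ⟪w, u⟫ := by
    have := hK _ (add_mem_add hk (mem_closedBall_zero_iff.2 hεu.le))
    rw [add_sub_add_left_eq_sub, inner_sub_left, real_inner_smul_left,
      real_inner_self_eq_norm_sq, hu] at this
    linarith
  have hsq : ‖w - ε • u‖ ^ 2 ≤ 0 := by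
    rw [norm_sub_sq_real, hεu, real_inner_smul_right]
    nlinarith [mul_le_mul_of_nonneg_left hwu hε, pow_le_pow_left₀ (norm_nonneg w) hw 2]
  have hw_eq : w = ε • u :=
    sub_eq_zero.1 (norm_eq_zero.1 (pow_eq_zero_iff two_ne_zero |>.1 (hsq.antisymm (sq_nonneg _))))
  rwa [hw_eq, add_sub_cancel_right]

theorem one_sub_two_mul_div_le_inner {x q u v : E} {ε δ : ℝ} (hε : 0 < ε) (hv : ‖v‖ = 1)
    (hxq : dist x q ≤ δ) (h : ⟪x - ε • u + ε • v - q, v⟫ ≤ δ) :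
    1 - 2 * (δ / ε) ≤ ⟪v, u⟫ := by
  have hxq' : -δ ≤ ⟪x - q, v⟫ := by
    have := abs_real_inner_le_norm (x - q) v
    rw [hv, mul_one, ← dist_eq_norm] at this
    linarith [neg_abs_le ⟪x - q, v⟫]
  have hsplit : ⟪x - ε • u + ε • v - q, v⟫ = ⟪x - q, v⟫ + ε * (1 - ⟪u, v⟫) := by
    rw [show x - ε • u + ε • v - q = (x - q) - ε • u + ε • v by abel, inner_add_left,
      inner_sub_left, real_inner_smul_left, real_inner_smul_left, real_inner_self_eq_norm_sq, hv]
    ring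
  have hdiv : 1 - ⟪u, v⟫ ≤ 2 * δ / ε := by
    rw [le_div_iff₀ hε]
    linarith
  linarith [mul_div_assoc 2 δ ε, real_inner_comm u v]

theorem norm_sub_le_two_mul_sqrt_of_one_sub_two_mul_le_inner {u v : E} {t : ℝ} (hu : ‖u‖ = 1)
    (hv : ‖v‖ = 1) (h : 1 - 2 * t ≤ ⟪u, v⟫) : ‖u - v‖ ≤ 2 * √t := by
  have hsq : ‖u - v‖ ^ 2 ≤ 4 * t := by
    rw [norm_sub_sq_real, hu, hv]
    linarith
  calc ‖u - v‖ = √(‖u - v‖ ^ 2) := (Real.sqrt_sq (norm_nonneg _)).symm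
    _ ≤ √(4 * t) := Real.sqrt_le_sqrt hsq
    _ = 2 * √t := by
      rw [Real.sqrt_mul (by norm_num), show (4 : ℝ) = 2 ^ 2 by norm_num,
        Real.sqrt_sq (by norm_num)]

end InnerProductSpace

theorem normals_dist_le_general
    (n : ℕ) (ε δ : ℝ) (hε : ε ∈ Set.Ioo (0:ℝ) 1)
    (K L : Set (EuclideanSpace ℝ (Fin n)))
    (hKsmooth : ∃ K' : Set (EuclideanSpace ℝ (Fin n)), K'.Nonempty ∧ IsCompact K' ∧
      Convex ℝ K' ∧ K = K' + closedBall (0 : EuclideanSpace ℝ (Fin n)) ε)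
    (hLsmooth : ∃ L' : Set (EuclideanSpace ℝ (Fin n)), L'.Nonempty ∧ IsCompact L' ∧
      Convex ℝ L' ∧ L = L' + closedBall (0 : EuclideanSpace ℝ (Fin n)) ε)
    (hd : hausdorffDist K L ≤ δ)
    (p : EuclideanSpace ℝ (Fin n) → EuclideanSpace ℝ (Fin n))
    (hp : ∀ x ∈ frontier K, p x ∈ frontier L ∧ dist x (p x) = infDist x (frontier L))
    (uK uL : EuclideanSpace ℝ (Fin n) → EuclideanSpace ℝ (Fin n))
    (huK_unit : ∀ x ∈ frontier K, ‖uK x‖ = 1)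
    (huK_normal : ∀ x ∈ frontier K, ∀ y ∈ K, ⟪y - x, uK x⟫ ≤ 0)
    (huL_unit : ∀ x ∈ frontier L, ‖uL x‖ = 1)
    (huL_normal : ∀ x ∈ frontier L, ∀ y ∈ L, ⟪y - x, uL x⟫ ≤ 0) :
    ∀ x ∈ frontier K, ‖uL (p x) - uK x‖ ≤ 2 * Real.sqrt (δ / ε) := by
  obtain ⟨K', hK'ne, hK'c, -, rfl⟩ := hKsmooth
  obtain ⟨L', hL'ne, hL'c, -, rfl⟩ := hLsmooth
  have hball : (closedBall (0 : EuclideanSpace ℝ (Fin n)) ε).Nonempty :=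
    nonempty_closedBall.2 hε.1.le
  have hKc := hK'c.add (isCompact_closedBall (0 : EuclideanSpace ℝ (Fin n)) ε)
  have hLc := hL'c.add (isCompact_closedBall (0 : EuclideanSpace ℝ (Fin n)) ε)
  have hKL := hausdorffEDist_ne_top_of_nonempty_of_bounded (hK'ne.add hball) (hL'ne.add hball)
    hKc.isBounded hLc.isBounded
  intro x hx
  obtain ⟨hq, hxq⟩ := hp x hx
  have hxK := hKc.isClosed.frontier_subset hx
  have hyK : x - ε • uK x + ε • uL (p x) ∈ K' + closedBall 0 ε :=
    add_mem_add (sub_smul_mem_of_forall_inner_nonpos (huK_unit x hx) hxK (huK_normal x hx))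
      (by simp [norm_smul, huL_unit _ hq, abs_of_pos hε.1])
  have hxq' : dist x (p x) ≤ δ :=
    hxq ▸ infDist_frontier_le_of_hausdorffDist_le (huK_unit x hx) (huK_normal x hx) hxK hKL hd
  have hyq : ⟪x - ε • uK x + ε • uL (p x) - p x, uL (p x)⟫ ≤ δ :=
    inner_sub_le_of_hausdorffDist_le (huL_unit _ hq) (huL_normal _ hq) hKL hd hyK
  exact norm_sub_le_two_mul_sqrt_of_one_sub_two_mul_le_inner (huL_unit _ hq) (huK_unit x hx)
    (one_sub_two_mul_div_le_inner hε.1 (huL_unit _ hq) hxq' hyq)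

/-- For ε-smooth convex bodies K, L with Hausdorff distance at most δ < ε/2, the outer
unit normal of L at the nearest point p(x) ∈ ∂L to x ∈ ∂K and the outer unit normal of K
at x satisfy |u_L(p(x)) − u_K(x)| ≤ 2√(δ/ε). -/
theorem normals_dist_le
    (n : ℕ) (ε δ : ℝ) (hε : ε ∈ Set.Ioo (0:ℝ) 1) (hδ : δ ∈ Set.Ioo (0:ℝ) (ε/2))
    (K L : Set (EuclideanSpace ℝ (Fin n)))
    (hKsmooth : ∃ K' : Set (EuclideanSpace ℝ (Fin n)), K'.Nonempty ∧ IsCompact K' ∧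
      Convex ℝ K' ∧ K = K' + closedBall (0 : EuclideanSpace ℝ (Fin n)) ε)
    (hLsmooth : ∃ L' : Set (EuclideanSpace ℝ (Fin n)), L'.Nonempty ∧ IsCompact L' ∧
      Convex ℝ L' ∧ L = L' + closedBall (0 : EuclideanSpace ℝ (Fin n)) ε)
    (hd : hausdorffDist K L ≤ δ)
    (p : EuclideanSpace ℝ (Fin n) → EuclideanSpace ℝ (Fin n))
    (hp : ∀ x ∈ frontier K, p x ∈ frontier L ∧ dist x (p x) = infDist x (frontier L))
    (uK uL : EuclideanSpace ℝ (Fin n) → EuclideanSpace ℝ (Fin n))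
    (huK_unit : ∀ x ∈ frontier K, ‖uK x‖ = 1)
    (huK_normal : ∀ x ∈ frontier K, ∀ y ∈ K, ⟪y - x, uK x⟫ ≤ 0)
    (huL_unit : ∀ x ∈ frontier L, ‖uL x‖ = 1)
    (huL_normal : ∀ x ∈ frontier L, ∀ y ∈ L, ⟪y - x, uL x⟫ ≤ 0) :
    ∀ x ∈ frontier K, ‖uL (p x) - uK x‖ ≤ 2 * Real.sqrt (δ / ε) :=
  normals_dist_le_general n ε δ hε K L hKsmooth hLsmooth hd p hp uK uL huK_unit huK_normal huL_unit
    huL_normal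
end

section
/- Let ε ∈ (0,1), δ ∈ (0, ε/2), and let K, L ⊂ ℝⁿ be ε-smooth convex bodies with d_H(K,L) ≤ δ. Then the map G : Nor K → Nor L, (x,u) ↦ (p(x), u_L(p(x))), is Lipschitz with Lipschitz constant at most 2/(ε−δ). -/
open Metric Set Pointwise
open scoped RealInnerProductSpace

theorem infDist_le_of_hausdorffDist_le {X : Type*} [PseudoMetricSpace X] {s t : Set X}
    {δ : ℝ} (ht : t.Nonempty) (hsb : Bornology.IsBounded s) (htb : Bornology.IsBounded t)
    (hd : hausdorffDist s t ≤ δ) {x : X} (hx : x ∈ s) : infDist x t ≤ δ :=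
  (infDist_le_hausdorffDist_of_mem hx
    (hausdorffEDist_ne_top_of_nonempty_of_bounded ⟨x, hx⟩ ht hsb htb)).trans hd

section NormedSpace

variable {E : Type*} [NormedAddCommGroup E] [NormedSpace ℝ E]

theorem infDist_frontier_le_dist {s : Set E} {x y : E} (hx : x ∈ s) (hy : y ∉ s) :
    infDist x (frontier s) ≤ dist x y := by
  obtain ⟨z, hz, hzs⟩ := (convex_segment x y).isPreconnected.inter_frontier_nonempty
    ⟨x, left_mem_segment ℝ x y, hx⟩ ⟨y, right_mem_segment ℝ x y, hy⟩
  calc infDist x (frontier s) ≤ dist x z := infDist_le_dist_of_mem hzs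
    _ ≤ dist x y := by linarith [dist_add_dist_of_mem_segment hz, dist_nonneg (x := z) (y := y)]

theorem infDist_frontier_le_infDist {s : Set E} {x : E} (hx : x ∉ s) (hs : s.Nonempty) :
    infDist x (frontier s) ≤ infDist x s :=
  (le_infDist hs).2 fun y hy => by
    rw [← frontier_compl]
    exact infDist_frontier_le_dist hx (not_not.2 hy)

theorem add_smul_mem_closedBall {c u : E} {r : ℝ} (hr : 0 ≤ r) (hu : ‖u‖ = 1) :
    c + r • u ∈ closedBall c r := by
  simp [dist_eq_norm, norm_smul, hu, abs_of_nonneg hr]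

end NormedSpace

section InnerProductSpace

variable {E : Type*} [NormedAddCommGroup E] [InnerProductSpace ℝ E]

theorem le_infDist_add_smul {K : Set E} {x u : E} (s : ℝ) (hK : K.Nonempty) (hu : ‖u‖ = 1)
    (hnormal : ∀ y ∈ K, ⟪y - x, u⟫ ≤ 0) : s ≤ infDist (x + s • u) K :=
  (le_infDist hK).2 fun y hy => by
    calc s = ⟪x + s • u - y, u⟫ + ⟪y - x, u⟫ := by
          rw [← inner_add_left, show x + s • u - y + (y - x) = s • u by abel,
            real_inner_smul_left, real_inner_self_eq_norm_sq, hu, one_pow, mul_one]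
      _ ≤ ⟪x + s • u - y, u⟫ := by linarith [hnormal y hy]
      _ ≤ dist (x + s • u) y := by
          simpa [hu, dist_eq_norm] using real_inner_le_norm (x + s • u - y) u

theorem eq_add_smul_of_closedBall_subset {L : Set E} {c q u : E} {r : ℝ}
    (hball : closedBall c r ⊆ L) (hq : dist q c ≤ r) (hu : ‖u‖ = 1)
    (hnormal : ∀ y ∈ L, ⟪y - q, u⟫ ≤ 0) : q = c + r • u := by
  have hr : 0 ≤ r := dist_nonneg.trans hq
  have hinner : r ≤ ⟪q - c, u⟫ := by
    have := hnormal _ (hball (add_smul_mem_closedBall hr hu))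
    rw [show c + r • u - q = r • u - (q - c) by abel, inner_sub_left, real_inner_smul_left,
      real_inner_self_eq_norm_sq, hu] at this
    linarith
  have hcs : ⟪q - c, u⟫ ≤ ‖q - c‖ := by simpa [hu] using real_inner_le_norm (q - c) u
  have hnorm : ‖q - c‖ = r := le_antisymm (dist_eq_norm q c ▸ hq) (hinner.trans hcs)
  have heq : ⟪q - c, u⟫ = ‖q - c‖ * ‖u‖ := by rw [hu, mul_one]; linarith
  rw [inner_eq_norm_mul_iff_real, hu, hnorm, one_smul] at heq
  rw [← heq]
  abel

theorem closedBall_sub_smul_subset_add_closedBall {L' : Set E} {ε : ℝ} {q u : E}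
    (hq : q ∈ L' + closedBall 0 ε) (hu : ‖u‖ = 1)
    (hnormal : ∀ y ∈ L' + closedBall 0 ε, ⟪y - q, u⟫ ≤ 0) :
    closedBall (q - ε • u) ε ⊆ L' + closedBall 0 ε := by
  obtain ⟨a, ha, b, hb, rfl⟩ := hq
  have hball : closedBall a ε ⊆ L' + closedBall 0 ε := fun z hz =>
    ⟨a, ha, z - a, by simpa [dist_eq_norm] using hz, add_sub_cancel a z⟩
  have hab := eq_add_smul_of_closedBall_subset hball (by simpa [dist_eq_norm] using hb) hu hnormal
  rwa [hab, add_sub_cancel_right]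

theorem mul_norm_sub_le_of_closedBall_subset {L : Set E} {ε : ℝ} (hε : 0 ≤ ε) {q q' u u' : E}
    (hu : ‖u‖ = 1) (hu' : ‖u'‖ = 1)
    (hnormal : ∀ y ∈ L, ⟪y - q, u⟫ ≤ 0) (hnormal' : ∀ y ∈ L, ⟪y - q', u'⟫ ≤ 0)
    (hball : closedBall (q - ε • u) ε ⊆ L) (hball' : closedBall (q' - ε • u') ε ⊆ L) :
    ε * ‖u - u'‖ ≤ ‖q - q'‖ := by
  have h := hnormal _ (hball' (add_smul_mem_closedBall hε hu))
  have h' := hnormal' _ (hball (add_smul_mem_closedBall hε hu'))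
  have hmono : ε * ‖u - u'‖ ^ 2 ≤ ⟪q - q', u - u'⟫ := by
    have e : ε * ‖u - u'‖ ^ 2 - ⟪q - q', u - u'⟫ =
        ⟪q' - ε • u' + ε • u - q, u⟫ + ⟪q - ε • u + ε • u' - q', u'⟫ := by
      rw [← real_inner_self_eq_norm_sq]
      simp only [inner_add_left, inner_sub_left, inner_smul_left, inner_sub_right,
        RCLike.conj_to_real, real_inner_comm u u']
      ring
    linarith
  have hcs := real_inner_le_norm (q - q') (u - u')
  rcases (norm_nonneg (u - u')).eq_or_lt with h0 | h0
  · rw [← h0, mul_zero]; exact norm_nonneg _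
  · nlinarith

theorem neg_sq_le_two_mul_inner_of_closedBall_subset {L : Set E} {ε : ℝ} (hε : 0 ≤ ε)
    {q q' u : E} (hu : ‖u‖ = 1) (hball : closedBall (q - ε • u) ε ⊆ L)
    (hq' : q' ∉ interior L) :
    -‖q' - q‖ ^ 2 ≤ 2 * ε * ⟪q' - q, u⟫ := by
  have hfar : ε ≤ ‖(q' - q) + ε • u‖ := by
    have : q' ∉ ball (q - ε • u) ε := fun h =>
      hq' (interior_maximal (ball_subset_closedBall.trans hball) isOpen_ball h)
    simpa [dist_eq_norm, sub_add] using this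
  have := pow_le_pow_left₀ hε hfar 2
  rw [norm_add_sq_real, real_inner_smul_right, norm_smul, hu, Real.norm_of_nonneg hε] at this
  nlinarith

theorem infDist_frontier_le_of_forall_inner_le_zero {K L : Set E} {δ : ℝ} {x u : E}
    (hK : K.Nonempty) (hL : L.Nonempty) (hLK : ∀ z ∈ L, infDist z K ≤ δ)
    (hxL : infDist x L ≤ δ) (hu : ‖u‖ = 1) (hnormal : ∀ y ∈ K, ⟪y - x, u⟫ ≤ 0) :
    infDist x (frontier L) ≤ δ := by
  by_cases hx : x ∈ L
  · refine le_of_forall_gt_imp_ge_of_dense fun s hs => ?_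
    have hout : x + s • u ∉ L := fun h =>
      ((hLK _ h).trans_lt hs).not_ge (le_infDist_add_smul s hK hu hnormal)
    have hs0 : 0 ≤ s := infDist_nonneg.trans (hxL.trans hs.le)
    calc infDist x (frontier L) ≤ dist x (x + s • u) := infDist_frontier_le_dist hx hout
      _ = s := by rw [dist_self_add_right, norm_smul, hu, Real.norm_of_nonneg hs0, mul_one]
  · exact (infDist_frontier_le_infDist hx hL).trans hxL

theorem two_mul_inner_le_of_dist_eq_infDist_frontier {L : Set E} {ε δ : ℝ} (hε : 0 ≤ ε)
    (hLconv : Convex ℝ L) (hLcl : IsClosed L) {uL : E → E}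
    (hu : ∀ q ∈ frontier L, ‖uL q‖ = 1)
    (hnormal : ∀ q ∈ frontier L, ∀ y ∈ L, ⟪y - q, uL q⟫ ≤ 0)
    (hball : ∀ q ∈ frontier L, closedBall (q - ε • uL q) ε ⊆ L)
    {x q q' : E} (hq : q ∈ frontier L) (hq' : q' ∈ frontier L)
    (hproj : dist x q = infDist x (frontier L)) (hδ : dist x q ≤ δ) :
    2 * ε * ⟪x - q, q' - q⟫ ≤ δ * ‖q' - q‖ ^ 2 := by
  have hqL := hLcl.frontier_subset hq
  by_cases hxL : x ∈ L
  · have hLc : Lᶜ.Nonempty :=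
      closure_nonempty_iff.1 ⟨q, frontier_subset_closure (frontier_compl L ▸ hq)⟩
    have hxball : closedBall x (dist x q) ⊆ L :=
      calc closedBall x (dist x q) ⊆ closedBall x (infDist x Lᶜ) := by
            refine closedBall_subset_closedBall ?_
            rw [hproj, ← frontier_compl]
            exact infDist_frontier_le_infDist (not_not.2 hxL) hLc
        _ ⊆ closure L := closedBall_infDist_compl_subset_closure hxL
        _ = L := hLcl.closure_eq
    have hxq : x - q = -(dist x q • uL q) := by
      conv_lhs =>
        rw [eq_add_smul_of_closedBall_subset hxball (dist_comm q x).le (hu q hq) (hnormal q hq)]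
      abel
    have houter := neg_sq_le_two_mul_inner_of_closedBall_subset hε (hu q hq) (hball q hq) hq'.2
    rw [hxq, inner_neg_left, real_inner_smul_left, real_inner_comm]
    nlinarith [mul_le_mul_of_nonneg_left houter (dist_nonneg (x := x) (y := q)),
      mul_le_mul_of_nonneg_right hδ (sq_nonneg ‖q' - q‖)]
  · have hmin : dist x q = infDist x L :=
      le_antisymm (hproj ▸ infDist_frontier_le_infDist hxL ⟨q, hqL⟩) (infDist_le_dist_of_mem hqL)
    rw [infDist_eq_iInf] at hmin
    simp only [dist_eq_norm] at hmin
    have hobtuse :=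
      (norm_eq_iInf_iff_real_inner_le_zero hLconv hqL).1 hmin q' (hLcl.frontier_subset hq')
    nlinarith [mul_nonneg (dist_nonneg.trans hδ) (sq_nonneg ‖q' - q‖)]

theorem mul_norm_sub_le_of_two_mul_inner_le {ε δ : ℝ} (hε : 0 ≤ ε) {x y a b : E}
    (ha : 2 * ε * ⟪x - a, b - a⟫ ≤ δ * ‖b - a‖ ^ 2)
    (hb : 2 * ε * ⟪y - b, a - b⟫ ≤ δ * ‖a - b‖ ^ 2) :
    (ε - δ) * ‖a - b‖ ≤ ε * ‖x - y‖ := by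
  have hsum : ⟪x - a, b - a⟫ + ⟪y - b, a - b⟫ = ‖a - b‖ ^ 2 - ⟪x - y, a - b⟫ := by
    rw [← real_inner_self_eq_norm_sq]
    simp only [inner_sub_left, inner_sub_right, real_inner_comm a b]
    ring
  rw [norm_sub_rev b a] at ha
  have hcs := real_inner_le_norm (x - y) (a - b)
  rcases (norm_nonneg (a - b)).eq_or_lt with h0 | h0
  · rw [← h0, mul_zero]; exact mul_nonneg hε (norm_nonneg _)
  · nlinarith [mul_le_mul_of_nonneg_left hcs hε]

end InnerProductSpace

theorem sqrt_sq_add_sq_le_of_mul_le {c A B D U : ℝ} (hc : 0 < c) (hD : c * D ≤ A)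
    (hU : c * U ≤ A) (hD0 : 0 ≤ D) (hU0 : 0 ≤ U) :
    √(D ^ 2 + U ^ 2) ≤ 2 / c * √(A ^ 2 + B ^ 2) := by
  have hA : 0 ≤ A := (mul_nonneg hc.le hD0).trans hD
  calc √(D ^ 2 + U ^ 2) ≤ D + U := (Real.sqrt_le_left (by positivity)).2 (by nlinarith)
    _ ≤ 2 / c * A := by rw [div_mul_eq_mul_div, le_div_iff₀ hc]; linarith
    _ ≤ 2 / c * √(A ^ 2 + B ^ 2) := by
        gcongr
        exact (Real.le_sqrt hA (by positivity)).2 (by nlinarith)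

/-- For ε-smooth convex bodies K, L with Hausdorff distance at most δ < ε/2, the map
G : Nor K → Nor L, (x, u_K(x)) ↦ (p(x), u_L(p(x))), between the normal bundles (subsets
of ℝ^{2n} with the Euclidean norm) is Lipschitz with constant at most 2/(ε − δ). -/
theorem normal_bundle_map_lipschitz
    (n : ℕ) (ε δ : ℝ) (hε : ε ∈ Set.Ioo (0:ℝ) 1) (hδ : δ ∈ Set.Ioo (0:ℝ) (ε/2))
    (K L : Set (EuclideanSpace ℝ (Fin n)))
    (hKsmooth : ∃ K' : Set (EuclideanSpace ℝ (Fin n)), K'.Nonempty ∧ IsCompact K' ∧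
      Convex ℝ K' ∧ K = K' + closedBall (0 : EuclideanSpace ℝ (Fin n)) ε)
    (hLsmooth : ∃ L' : Set (EuclideanSpace ℝ (Fin n)), L'.Nonempty ∧ IsCompact L' ∧
      Convex ℝ L' ∧ L = L' + closedBall (0 : EuclideanSpace ℝ (Fin n)) ε)
    (hd : hausdorffDist K L ≤ δ)
    (p : EuclideanSpace ℝ (Fin n) → EuclideanSpace ℝ (Fin n))
    (hp : ∀ x ∈ frontier K, p x ∈ frontier L ∧ dist x (p x) = infDist x (frontier L))
    (uK uL : EuclideanSpace ℝ (Fin n) → EuclideanSpace ℝ (Fin n))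
    (huK_unit : ∀ x ∈ frontier K, ‖uK x‖ = 1)
    (huK_normal : ∀ x ∈ frontier K, ∀ y ∈ K, ⟪y - x, uK x⟫ ≤ 0)
    (huL_unit : ∀ x ∈ frontier L, ‖uL x‖ = 1)
    (huL_normal : ∀ x ∈ frontier L, ∀ y ∈ L, ⟪y - x, uL x⟫ ≤ 0) :
    ∀ x ∈ frontier K, ∀ y ∈ frontier K,
      Real.sqrt (‖p x - p y‖ ^ 2 + ‖uL (p x) - uL (p y)‖ ^ 2)
        ≤ (2 / (ε - δ)) * Real.sqrt (‖x - y‖ ^ 2 + ‖uK x - uK y‖ ^ 2) := by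
  obtain ⟨hε0, hε1⟩ := hε
  obtain ⟨K', hK'ne, hK'cpt, -, hKeq⟩ := hKsmooth
  obtain ⟨L', hL'ne, hL'cpt, hL'conv, hLeq⟩ := hLsmooth
  have hKcpt : IsCompact K := hKeq ▸ hK'cpt.add (isCompact_closedBall 0 ε)
  have hLcpt : IsCompact L := hLeq ▸ hL'cpt.add (isCompact_closedBall 0 ε)
  have hKne : K.Nonempty := hKeq ▸ hK'ne.add (nonempty_closedBall.2 hε0.le)
  have hLne : L.Nonempty := hLeq ▸ hL'ne.add (nonempty_closedBall.2 hε0.le)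
  have hball : ∀ q ∈ frontier L, closedBall (q - ε • uL q) ε ⊆ L := fun q hq => by
    subst hLeq
    exact closedBall_sub_smul_subset_add_closedBall (hLcpt.isClosed.frontier_subset hq)
      (huL_unit q hq) (huL_normal q hq)
  have hLK : ∀ z ∈ L, infDist z K ≤ δ := fun z hz =>
    infDist_le_of_hausdorffDist_le hKne hLcpt.isBounded hKcpt.isBounded
      (hausdorffDist_comm (s := K) ▸ hd) hz
  have hproj : ∀ x ∈ frontier K, ∀ q ∈ frontier L,
      2 * ε * ⟪x - p x, q - p x⟫ ≤ δ * ‖q - p x‖ ^ 2 := fun x hx q hq =>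
    two_mul_inner_le_of_dist_eq_infDist_frontier hε0.le
      (hLeq ▸ hL'conv.add (convex_closedBall 0 ε)) hLcpt.isClosed huL_unit huL_normal hball
      (hp x hx).1 hq (hp x hx).2
      ((hp x hx).2.trans_le (infDist_frontier_le_of_forall_inner_le_zero hKne hLne hLK
        (infDist_le_of_hausdorffDist_le hLne hKcpt.isBounded hLcpt.isBounded hd
          (hKcpt.isClosed.frontier_subset hx)) (huK_unit x hx) (huK_normal x hx)))
  intro x hx y hy
  have hpx := (hp x hx).1
  have hpy := (hp y hy).1
  have hD := mul_norm_sub_le_of_two_mul_inner_le hε0.le (hproj x hx _ hpy) (hproj y hy _ hpx)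
  have hU := mul_norm_sub_le_of_closedBall_subset hε0.le (huL_unit _ hpx) (huL_unit _ hpy)
    (huL_normal _ hpx) (huL_normal _ hpy) (hball _ hpx) (hball _ hpy)
  have hδε : 0 < ε - δ := by linarith [hδ.2]
  have hA := norm_nonneg (x - y)
  exact sqrt_sq_add_sq_le_of_mul_le hδε (by nlinarith) (by nlinarith) (norm_nonneg _)
    (norm_nonneg _)
end

section
/- Let K, L be convex bodies in ℝⁿ contained in a ball of radius R, with d_H(K,L) = δ ≤ 1, and let ρ ∈ (0,1]. Then the Lebesgue measure of the symmetric difference of the parallel shells satisfies ℋⁿ(K^ρ △ L^ρ) ≤ C(R) δ, where C(R) depends only on n and R. -/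
/-!
The shells are `(K + ρBⁿ) \ K = {0 < d_K ≤ ρ}` with `d_K` the distance to `K`, and since
`|d_K - d_L| ≤ δ`, the symmetric difference lies in the four shells `{a < d_M ≤ a + δ}` with
`M ∈ {K, L}` and `a ∈ {0, ρ}`. In place of the Steiner formula: for convex `M`, pushing every
point a distance `b` further out along its normal `x - p x` (`p` the metric projection) maps
`{a < d_M ≤ a + δ}` into `{a + b < d_M ≤ a + b + δ}` without decreasing distances, so the outer
shell has at least the volume of the inner one. Stacking `⌊1/δ⌋` disjoint shells inside the ball of
radius `R + 2` then bounds each shell by `2δ · vol(B(R + 2))`.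
-/

open Metric Set Pointwise MeasureTheory
open scoped ENNReal RealInnerProductSpace

theorem hausdorffMeasure_le_image_of_forall_edist_le {X Y : Type*} [EMetricSpace X]
    [MeasurableSpace X] [BorelSpace X] [EMetricSpace Y] [MeasurableSpace Y] [BorelSpace Y]
    {f : X → Y} {s : Set X} (hf : ∀ x ∈ s, ∀ y ∈ s, edist x y ≤ edist (f x) (f y))
    {d : ℝ} (hd : 0 ≤ d) : μH[d] s ≤ μH[d] (f '' s) := by
  have hanti : AntilipschitzWith 1 (fun x : s => f x) := fun x y => by
    simpa [Subtype.edist_eq] using hf x x.2 y y.2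
  calc μH[d] s = μH[d] (univ : Set s) := by
        rw [← (isometry_subtype_coe (s := s)).hausdorffMeasure_image (Or.inl hd), image_univ,
          Subtype.range_coe]
    _ ≤ μH[d] ((fun x : s => f x) '' univ) := by
        simpa using hanti.le_hausdorffMeasure_image hd univ
    _ = μH[d] (f '' s) := by rw [image_univ, range_comp', Subtype.range_coe]

theorem volume_le_volume_image_of_forall_dist_le {V : Type*} [NormedAddCommGroup V]
    [InnerProductSpace ℝ V] [FiniteDimensional ℝ V] [MeasurableSpace V] [BorelSpace V]
    {f : V → V} {s : Set V} (hf : ∀ x ∈ s, ∀ y ∈ s, dist x y ≤ dist (f x) (f y)) :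
    volume s ≤ volume (f '' s) := by
  rw [← InnerProductSpace.euclideanHausdorffMeasure_eq_volume,
    Measure.euclideanHausdorffMeasure_def, Measure.smul_apply, Measure.smul_apply]
  refine smul_le_smul_of_nonneg_left (hausdorffMeasure_le_image_of_forall_edist_le
    (fun x hx y hy => ?_) (Nat.cast_nonneg _)) zero_le
  simpa only [edist_dist] using ENNReal.ofReal_le_ofReal (hf x hx y hy)

theorem mem_cthickening_iff_infDist_le {X : Type*} [PseudoMetricSpace X] {s : Set X} {x : X}
    {δ : ℝ} (hs : s.Nonempty) (hδ : 0 ≤ δ) : x ∈ cthickening δ s ↔ infDist x s ≤ δ := by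
  rw [mem_cthickening_iff, ← ENNReal.ofReal_toReal (infEDist_ne_top hs),
    ENNReal.ofReal_le_ofReal_iff hδ, infDist]

section MetricProjection

variable {F : Type*} [NormedAddCommGroup F] [InnerProductSpace ℝ F]

def IsMetricProjection (K : Set F) (p : F → F) : Prop :=
  ∀ x, p x ∈ K ∧ dist x (p x) = infDist x K ∧ ∀ z ∈ K, ⟪x - p x, z - p x⟫ ≤ 0

theorem Convex.exists_isMetricProjection {K : Set F} (hK : Convex ℝ K) (hne : K.Nonempty)
    (hc : IsComplete K) : ∃ p, IsMetricProjection K p := by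
  have h (x : F) : ∃ y ∈ K, dist x y = infDist x K ∧ ∀ z ∈ K, ⟪x - y, z - y⟫ ≤ 0 := by
    obtain ⟨y, hyK, hy⟩ := exists_norm_eq_iInf_of_complete_convex hne hc hK x
    have hinf : ‖x - y‖ = infDist x K := by simpa [infDist_eq_iInf, dist_eq_norm] using hy
    exact ⟨y, hyK, by rw [dist_eq_norm, hinf],
      (norm_eq_iInf_iff_real_inner_le_zero hK hyK).1 hy⟩
  choose p hpK hp using h
  exact ⟨p, fun x => ⟨hpK x, hp x⟩⟩

noncomputable def normalPush (p : F → F) (b : ℝ) (x : F) : F :=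
  x + (b / ‖x - p x‖) • (x - p x)

theorem inner_sub_add_div_norm_smul_nonneg (u v w : F) {b : ℝ} (hb : 0 ≤ b)
    (hu : 0 ≤ ⟪u, w⟫) (hv : ⟪v, w⟫ ≤ 0) :
    0 ≤ ⟪u - v + w, (b / ‖u‖) • u - (b / ‖v‖) • v⟫ := by
  -- `b / ‖z‖ = 0` when `z = 0`, hence the inequality in the first conjunct
  have hscale (z : F) : b / ‖z‖ * ‖z‖ ≤ b ∧ b / ‖z‖ * (‖z‖ * ‖z‖) = b * ‖z‖ := by
    rcases eq_or_ne ‖z‖ 0 with h | h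
    · simp [h, hb]
    · exact ⟨(div_mul_cancel₀ b h).le, by field_simp⟩
  obtain ⟨hu₁, hu₂⟩ := hscale u
  obtain ⟨hv₁, hv₂⟩ := hscale v
  have huv : ⟪u, v⟫ ≤ ‖u‖ * ‖v‖ := real_inner_le_norm u v
  have hα : 0 ≤ b / ‖u‖ := by positivity
  have hβ : 0 ≤ b / ‖v‖ := by positivity
  rw [real_inner_comm] at hu hv
  rw [inner_sub_right, inner_add_left, inner_add_left, inner_sub_left, inner_sub_left,
    real_inner_smul_right, real_inner_smul_right, real_inner_smul_right,
    real_inner_smul_right, real_inner_smul_right, real_inner_smul_right,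
    real_inner_self_eq_norm_mul_norm, real_inner_self_eq_norm_mul_norm, real_inner_comm u v]
  nlinarith [mul_le_mul_of_nonneg_left huv hα, mul_le_mul_of_nonneg_left huv hβ,
    mul_le_mul_of_nonneg_right hu₁ (norm_nonneg v), mul_le_mul_of_nonneg_right hv₁ (norm_nonneg u),
    mul_nonneg hα hu, mul_nonpos_of_nonneg_of_nonpos hβ hv]

variable {K : Set F} {p : F → F}

theorem IsMetricProjection.inner_nonneg (hp : IsMetricProjection K p) (x : F) {z : F}
    (hz : z ∈ K) : 0 ≤ ⟪x - p x, p x - z⟫ := by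
  have h := (hp x).2.2 z hz
  rw [← neg_sub z, inner_neg_right]
  linarith

theorem IsMetricProjection.norm_sub (hp : IsMetricProjection K p) (x : F) :
    ‖x - p x‖ = infDist x K := by
  rw [← dist_eq_norm, (hp x).2.1]

theorem IsMetricProjection.infDist_normalPush (hp : IsMetricProjection K p) {b : ℝ}
    (hb : 0 ≤ b) {x : F} (hx : 0 < infDist x K) :
    infDist (normalPush p b x) K = infDist x K + b := by
  set d := infDist x K
  set u := x - p x
  have hu : ‖u‖ = d := hp.norm_sub x
  have hpush : normalPush p b x = x + (b / d) • u := by rw [normalPush, hu]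
  refine le_antisymm ?_ ?_
  · calc infDist (normalPush p b x) K ≤ dist (normalPush p b x) (p x) :=
          infDist_le_dist_of_mem (hp x).1
      _ = ‖(1 + b / d) • u‖ := by
          rw [hpush, dist_eq_norm, add_smul, one_smul, add_sub_right_comm, add_comm]
      _ = d + b := by
          rw [norm_smul, hu, Real.norm_of_nonneg (by positivity)]
          field_simp
  · refine (le_infDist ⟨p x, (hp x).1⟩).2 fun z hz => ?_
    have hproj : 0 ≤ ⟪u, p x - z⟫ := hp.inner_nonneg x hz
    have hlow : (d + b) * d ≤ ⟪normalPush p b x - z, u⟫ := by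
      rw [hpush, show x + (b / d) • u - z = u + (p x - z) + (b / d) • u by simp only [u]; abel,
        inner_add_left, inner_add_left, real_inner_smul_left, real_inner_self_eq_norm_mul_norm,
        real_inner_comm, hu]
      field_simp
      nlinarith
    have hup : ⟪normalPush p b x - z, u⟫ ≤ dist (normalPush p b x) z * d := by
      rw [dist_eq_norm, ← hu]
      exact real_inner_le_norm _ _
    nlinarith

theorem IsMetricProjection.dist_le_dist_normalPush (hp : IsMetricProjection K p) {b : ℝ}
    (hb : 0 ≤ b) (x y : F) : dist x y ≤ dist (normalPush p b x) (normalPush p b y) := by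
  set z := (b / ‖x - p x‖) • (x - p x) - (b / ‖y - p y‖) • (y - p y)
  have hpush : normalPush p b x - normalPush p b y = (x - y) + z := by
    simp only [normalPush, z]; abel
  have hz : 0 ≤ ⟪x - y, z⟫ := by
    rw [show x - y = (x - p x) - (y - p y) + (p x - p y) by abel]
    exact inner_sub_add_div_norm_smul_nonneg _ _ _ hb (hp.inner_nonneg x (hp y).1)
      ((hp y).2.2 (p x) (hp x).1)
  have hsq : ‖x - y‖ ^ 2 ≤ ‖x - y + z‖ ^ 2 := by
    rw [norm_add_sq_real]
    nlinarith [sq_nonneg ‖z‖]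
  rw [dist_eq_norm, dist_eq_norm, hpush]
  exact (sq_le_sq₀ (norm_nonneg _) (norm_nonneg _)).1 hsq

end MetricProjection

section ParallelShell

def parallelShell {X : Type*} [PseudoMetricSpace X] (K : Set X) (a b : ℝ) : Set X :=
  (infDist · K) ⁻¹' Ioc a b

theorem measurableSet_parallelShell {X : Type*} [PseudoMetricSpace X] [MeasurableSpace X]
    [OpensMeasurableSpace X] (K : Set X) (a b : ℝ) : MeasurableSet (parallelShell K a b) :=
  (continuous_infDist_pt K).measurable measurableSet_Ioc

theorem IsCompact.add_closedBall_zero_diff_self {E : Type*} [NormedAddCommGroup E]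
    {K : Set E} (hK : IsCompact K) (hne : K.Nonempty) {ρ : ℝ} (hρ : 0 ≤ ρ) :
    (K + closedBall 0 ρ) \ K = parallelShell K 0 ρ := by
  ext x
  rw [hK.add_closedBall_zero hρ, mem_sdiff, mem_cthickening_iff_infDist_le hne hρ,
    hK.isClosed.notMem_iff_infDist_pos hne]
  exact and_comm

theorem parallelShell_diff_parallelShell_subset {X : Type*} [PseudoMetricSpace X]
    {K L : Set X} (hKL : hausdorffEDist K L ≠ ⊤) (ρ : ℝ) :
    parallelShell K 0 ρ \ parallelShell L 0 ρ ⊆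
      parallelShell K 0 (hausdorffDist K L) ∪
        parallelShell L ρ (ρ + hausdorffDist K L) := by
  rintro x ⟨⟨hxK₀, hxKρ⟩, hxL⟩
  have hK : infDist x K ≤ infDist x L + hausdorffDist K L := by
    rw [hausdorffDist_comm]
    exact infDist_le_infDist_add_hausdorffDist (by rwa [hausdorffEDist_comm])
  have hL : infDist x L ≤ infDist x K + hausdorffDist K L :=
    infDist_le_infDist_add_hausdorffDist hKL
  rcases (infDist_nonneg (x := x) (s := L)).eq_or_lt with h | h
  · exact Or.inl ⟨hxK₀, by linarith⟩
  · exact Or.inr ⟨not_le.1 fun h' => hxL ⟨h, h'⟩, by linarith⟩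

theorem parallelShell_symmDiff_subset {X : Type*} [PseudoMetricSpace X] {K L : Set X}
    (hKL : hausdorffEDist K L ≠ ⊤) (ρ : ℝ) :
    parallelShell K 0 ρ \ parallelShell L 0 ρ ∪ parallelShell L 0 ρ \ parallelShell K 0 ρ ⊆
      parallelShell K 0 (hausdorffDist K L) ∪ parallelShell L ρ (ρ + hausdorffDist K L) ∪
        (parallelShell L 0 (hausdorffDist K L) ∪ parallelShell K ρ (ρ + hausdorffDist K L)) := by
  have hLK := parallelShell_diff_parallelShell_subset (hausdorffEDist_comm (s := K) ▸ hKL) ρ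
  rw [hausdorffDist_comm (s := L)] at hLK
  exact union_subset_union (parallelShell_diff_parallelShell_subset hKL ρ) hLK

theorem parallelShell_subset_closedBall {E : Type*} [NormedAddCommGroup E] [NormedSpace ℝ E]
    {K : Set E} (hne : K.Nonempty) {R : ℝ} (hKR : K ⊆ closedBall 0 R) {a b : ℝ} (hb : 0 ≤ b) :
    parallelShell K a b ⊆ closedBall 0 (b + R) := by
  obtain ⟨k, hk⟩ := hne
  have hR : 0 ≤ R := dist_nonneg.trans (hKR hk)
  intro x hx
  rw [← cthickening_closedBall hb hR]
  exact cthickening_subset_of_subset b hKR ((mem_cthickening_iff_infDist_le ⟨k, hk⟩ hb).2 hx.2)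

variable {V : Type*} [NormedAddCommGroup V] [InnerProductSpace ℝ V] [FiniteDimensional ℝ V]
  [MeasurableSpace V] [BorelSpace V] {K : Set V}

theorem Convex.volume_parallelShell_le_shift (hK : Convex ℝ K) (hne : K.Nonempty)
    (hc : IsComplete K) {a b : ℝ} (ha : 0 ≤ a) (hb : 0 ≤ b) (δ : ℝ) :
    volume (parallelShell K a (a + δ)) ≤ volume (parallelShell K (a + b) (a + b + δ)) := by
  obtain ⟨p, hp⟩ := hK.exists_isMetricProjection hne hc
  calc volume (parallelShell K a (a + δ))
      ≤ volume (normalPush p b '' parallelShell K a (a + δ)) :=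
        volume_le_volume_image_of_forall_dist_le fun x _ y _ =>
          hp.dist_le_dist_normalPush hb x y
    _ ≤ volume (parallelShell K (a + b) (a + b + δ)) := by
        refine measure_mono (image_subset_iff.2 fun x hx => ?_)
        have hx' : infDist x K ∈ Ioc a (a + δ) := hx
        show infDist (normalPush p b x) K ∈ Ioc (a + b) (a + b + δ)
        rw [hp.infDist_normalPush hb (ha.trans_lt hx'.1)]
        exact ⟨by linarith [hx'.1], by linarith [hx'.2]⟩

theorem Convex.natCast_mul_volume_parallelShell_le (hK : Convex ℝ K) (hne : K.Nonempty)
    (hc : IsComplete K) {a δ : ℝ} (ha : 0 ≤ a) (hδ : 0 ≤ δ) (m : ℕ) :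
    m * volume (parallelShell K a (a + δ)) ≤ volume (parallelShell K a (a + m * δ)) := by
  induction m with
  | zero => simp
  | succ m ih =>
    have hsplit : parallelShell K a (a + (m + 1 : ℕ) * δ) =
        parallelShell K a (a + m * δ) ∪ parallelShell K (a + m * δ) (a + m * δ + δ) := by
      rw [parallelShell, parallelShell, parallelShell, ← preimage_union,
        Ioc_union_Ioc_eq_Ioc (by linarith [mul_nonneg m.cast_nonneg hδ]) (by linarith)]
      push_cast
      ring_nf
    have hdisj : Disjoint (parallelShell K a (a + m * δ))
        (parallelShell K (a + m * δ) (a + m * δ + δ)) :=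
      (Ioc_disjoint_Ioc_of_le le_rfl).preimage _
    rw [hsplit, measure_union hdisj (measurableSet_parallelShell _ _ _), Nat.cast_succ,
      add_mul, one_mul]
    exact add_le_add ih (hK.volume_parallelShell_le_shift hne hc ha (by positivity) δ)

theorem Convex.volume_parallelShell_le (hK : Convex ℝ K) (hne : K.Nonempty) (hc : IsComplete K)
    {R : ℝ} (hKR : K ⊆ closedBall 0 R) {a δ : ℝ} (ha₀ : 0 ≤ a) (ha₁ : a ≤ 1) (hδ₀ : 0 ≤ δ)
    (hδ₁ : δ ≤ 1) :
    volume (parallelShell K a (a + δ)) ≤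
      ENNReal.ofReal (2 * δ) * volume (closedBall (0 : V) (R + 2)) := by
  rcases hδ₀.eq_or_lt with rfl | hδ
  · simp [parallelShell]
  set m := ⌊1 / δ⌋₊
  have hm₁ : 1 ≤ m := Nat.le_floor (by rw [Nat.cast_one, le_div_iff₀ hδ]; linarith)
  have hmδ : m * δ ≤ 1 := (le_div_iff₀ hδ).1 (Nat.floor_le (by positivity))
  have hm : (1 : ℝ≥0∞) ≤ ENNReal.ofReal (2 * δ) * m := by
    have h₁ : 1 / δ - 1 < m := Nat.sub_one_lt_floor _
    have h₂ : (1 : ℝ) ≤ m := by exact_mod_cast hm₁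
    rw [← ENNReal.ofReal_natCast, ← ENNReal.ofReal_mul (by positivity), ENNReal.one_le_ofReal]
    rw [div_sub_one hδ.ne', div_lt_iff₀ hδ] at h₁
    nlinarith
  calc volume (parallelShell K a (a + δ))
      ≤ ENNReal.ofReal (2 * δ) * m * volume (parallelShell K a (a + δ)) :=
        le_mul_of_one_le_left zero_le hm
    _ ≤ ENNReal.ofReal (2 * δ) * volume (parallelShell K a (a + m * δ)) := by
        rw [mul_assoc]
        gcongr
        exact hK.natCast_mul_volume_parallelShell_le hne hc ha₀ hδ₀ m
    _ ≤ ENNReal.ofReal (2 * δ) * volume (closedBall (0 : V) (R + 2)) := by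
        gcongr
        refine (parallelShell_subset_closedBall hne hKR (by positivity)).trans
          (closedBall_subset_closedBall ?_)
        linarith

theorem volume_parallelShell_symmDiff_le {L : Set V} (hKc : IsCompact K) (hKne : K.Nonempty)
    (hKv : Convex ℝ K) (hLc : IsCompact L) (hLne : L.Nonempty) (hLv : Convex ℝ L) {R : ℝ}
    (hKR : K ⊆ closedBall 0 R) (hLR : L ⊆ closedBall 0 R) (hδ₁ : hausdorffDist K L ≤ 1)
    {ρ : ℝ} (hρ₀ : 0 ≤ ρ) (hρ₁ : ρ ≤ 1) :
    volume (parallelShell K 0 ρ \ parallelShell L 0 ρ ∪ parallelShell L 0 ρ \ parallelShell K 0 ρ) ≤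
      4 * (ENNReal.ofReal (2 * hausdorffDist K L) * volume (closedBall (0 : V) (R + 2))) := by
  have hKL : hausdorffEDist K L ≠ ⊤ :=
    hausdorffEDist_ne_top_of_nonempty_of_bounded hKne hLne hKc.isBounded hLc.isBounded
  have hδ₀ : 0 ≤ hausdorffDist K L := hausdorffDist_nonneg
  have hK₀ := hKv.volume_parallelShell_le hKne hKc.isComplete hKR le_rfl zero_le_one hδ₀ hδ₁
  have hL₀ := hLv.volume_parallelShell_le hLne hLc.isComplete hLR le_rfl zero_le_one hδ₀ hδ₁
  have hKρ := hKv.volume_parallelShell_le hKne hKc.isComplete hKR hρ₀ hρ₁ hδ₀ hδ₁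
  have hLρ := hLv.volume_parallelShell_le hLne hLc.isComplete hLR hρ₀ hρ₁ hδ₀ hδ₁
  rw [zero_add] at hK₀ hL₀
  calc _ ≤ _ := measure_mono (parallelShell_symmDiff_subset hKL ρ)
    _ ≤ _ := (measure_union_le _ _).trans
          (add_le_add (measure_union_le _ _) (measure_union_le _ _))
    _ ≤ _ := add_le_add (add_le_add hK₀ hLρ) (add_le_add hL₀ hKρ)
    _ = _ := by ring

end ParallelShell

/-- For convex bodies K, L contained in a ball of radius R with Hausdorff distance
δ ≤ 1 and ρ ∈ (0,1], the Lebesgue measure of the symmetric difference of the parallel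
shells K^ρ := (K + ρBⁿ) \ K and L^ρ satisfies ℋⁿ(K^ρ △ L^ρ) ≤ C(R) δ for a constant
C(R) depending only on the dimension n and on R. -/
theorem shell_symmDiff_volume_le
    (n : ℕ) (R : ℝ) :
    ∃ C : ℝ, ∀ (K L : Set (EuclideanSpace ℝ (Fin n))) (δ ρ : ℝ),
      K.Nonempty → IsCompact K → Convex ℝ K →
      L.Nonempty → IsCompact L → Convex ℝ L →
      K ⊆ closedBall (0 : EuclideanSpace ℝ (Fin n)) R →
      L ⊆ closedBall (0 : EuclideanSpace ℝ (Fin n)) R →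
      hausdorffDist K L = δ → δ ≤ 1 → ρ ∈ Set.Ioc (0:ℝ) 1 →
      (volume
        ((((K + closedBall (0 : EuclideanSpace ℝ (Fin n)) ρ) \ K) \
            ((L + closedBall (0 : EuclideanSpace ℝ (Fin n)) ρ) \ L)) ∪
         (((L + closedBall (0 : EuclideanSpace ℝ (Fin n)) ρ) \ L) \
            ((K + closedBall (0 : EuclideanSpace ℝ (Fin n)) ρ) \ K)))).toReal
        ≤ C * δ := by
  set B := volume (closedBall (0 : EuclideanSpace ℝ (Fin n)) (R + 2))
  refine ⟨8 * B.toReal, ?_⟩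
  rintro K L δ ρ hKne hKc hKv hLne hLc hLv hKR hLR rfl hδ₁ ⟨hρ₀, hρ₁⟩
  rw [hKc.add_closedBall_zero_diff_self hKne hρ₀.le, hLc.add_closedBall_zero_diff_self hLne hρ₀.le]
  have hδ₀ : 0 ≤ hausdorffDist K L := hausdorffDist_nonneg
  refine ENNReal.toReal_le_of_le_ofReal (by positivity) ?_
  calc _ ≤ _ := volume_parallelShell_symmDiff_le hKc hKne hKv hLc hLne hLv hKR hLR hδ₁ hρ₀.le hρ₁
    _ = ENNReal.ofReal (8 * B.toReal * hausdorffDist K L) := by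
        rw [ENNReal.ofReal_mul (by positivity), ENNReal.ofReal_mul (by norm_num),
          ENNReal.ofReal_mul (by norm_num), ENNReal.ofReal_toReal measure_closedBall_lt_top.ne,
          ENNReal.ofReal_ofNat, ENNReal.ofReal_ofNat]
        ring
end

section
/- Let K, L be convex bodies in ℝⁿ and ρ > 0. Then the bounded Lipschitz distance between the measures μ_{K,ρ} and μ_{L,ρ} satisfies d_{bL}(μ_{K,ρ}, μ_{L,ρ}) ≤ ∫_{K^ρ ∩ L^ρ} |p_K − p_L| dℋⁿ + ∫_{K^ρ ∩ L^ρ} |u_K − u_L| dℋⁿ + ℋⁿ(K^ρ △ L^ρ). -/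
/-!
For a test function `f`, write both integrals over the shells `A = K^ρ`, `B = L^ρ` and split each
over `A ∩ B` and the rest of its shell. On `A ∩ B` the integrands differ by at most
`|p_K - p_L| + |u_K - u_L|`, since `f` is 1-Lipschitz for the Euclidean metric of the product and
`√(a² + b²) ≤ a + b`; on `A \ B` and `B \ A` they are bounded by `1`. The metric projection onto
a convex set is 1-Lipschitz, which makes all integrands measurable.
-/

open Metric Set Pointwise MeasureTheory
open scoped RealInnerProductSpace

/-- The bounded Lipschitz distance between two finite Borel measures on
Σ = ℝⁿ × ℝⁿ (with the Euclidean metric of ℝ^{2n}): the supremum of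
|∫ f dμ − ∫ f dν| over all f with Lipschitz constant ≤ 1 and sup-norm ≤ 1. -/
noncomputable def boundedLipschitzDist {n : ℕ}
    (μ ν : Measure (EuclideanSpace ℝ (Fin n) × EuclideanSpace ℝ (Fin n))) : ℝ :=
  sSup {r | ∃ f : EuclideanSpace ℝ (Fin n) × EuclideanSpace ℝ (Fin n) → ℝ,
    (∀ a b, |f a - f b| ≤ Real.sqrt (dist a.1 b.1 ^ 2 + dist a.2 b.2 ^ 2)) ∧
    (∀ z, |f z| ≤ 1) ∧ r = |∫ z, f z ∂μ - ∫ z, f z ∂ν|}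

section MetricProjection

variable {E : Type*} [NormedAddCommGroup E] [InnerProductSpace ℝ E] {K : Set E} {p : E → E}

theorem inner_sub_sub_nonpos_of_dist_eq_infDist (hK : Convex ℝ K)
    (hp : ∀ x, p x ∈ K ∧ dist x (p x) = infDist x K) (x : E) {w : E} (hw : w ∈ K) :
    ⟪x - p x, w - p x⟫ ≤ 0 := by
  refine (norm_eq_iInf_iff_real_inner_le_zero hK (hp x).1).1 ?_ w hw
  simpa only [dist_eq_norm, infDist_eq_iInf] using (hp x).2

theorem lipschitzWith_one_of_dist_eq_infDist (hK : Convex ℝ K)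
    (hp : ∀ x, p x ∈ K ∧ dist x (p x) = infDist x K) : LipschitzWith 1 p := by
  refine LipschitzWith.of_dist_le_mul fun x y => ?_
  rw [NNReal.coe_one, one_mul, dist_eq_norm, dist_eq_norm]
  have hx := inner_sub_sub_nonpos_of_dist_eq_infDist hK hp x (hp y).1
  have hy := inner_sub_sub_nonpos_of_dist_eq_infDist hK hp y (hp x).1
  rw [← neg_sub (p x) (p y), inner_neg_right] at hx
  have hmono : ‖p x - p y‖ ^ 2 ≤ ⟪x - y, p x - p y⟫ := by
    have hsplit : x - y = (x - p x) - (y - p y) + (p x - p y) := by abel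
    rw [hsplit, inner_add_left, inner_sub_left, real_inner_self_eq_norm_sq]
    linarith
  nlinarith [real_inner_le_norm (x - y) (p x - p y), norm_nonneg (x - y)]

end MetricProjection

theorem norm_sub_inv_norm_smul_le_two {E : Type*} [NormedAddCommGroup E] [NormedSpace ℝ E]
    (v w : E) : ‖‖v‖⁻¹ • v - ‖w‖⁻¹ • w‖ ≤ 2 := by
  have hunit (u : E) : ‖‖u‖⁻¹ • u‖ ≤ 1 := by
    rw [norm_smul, norm_inv, norm_norm]
    exact inv_mul_le_one_of_le₀ le_rfl (norm_nonneg u)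
  linarith [norm_sub_le (‖v‖⁻¹ • v) (‖w‖⁻¹ • w), hunit v, hunit w]

theorem Real.sqrt_sq_add_sq_le_add {a b : ℝ} (ha : 0 ≤ a) (hb : 0 ≤ b) :
    √(a ^ 2 + b ^ 2) ≤ a + b :=
  Real.sqrt_le_iff.2 ⟨add_nonneg ha hb, by nlinarith⟩

section ProductLipschitz

variable {X Y : Type*} [PseudoMetricSpace X] [PseudoMetricSpace Y] {f : X × Y → ℝ}

theorem abs_sub_le_dist_add_dist_of_le_sqrt
    (hf : ∀ a b, |f a - f b| ≤ √(dist a.1 b.1 ^ 2 + dist a.2 b.2 ^ 2)) (a b : X × Y) :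
    |f a - f b| ≤ dist a.1 b.1 + dist a.2 b.2 :=
  (hf a b).trans (Real.sqrt_sq_add_sq_le_add dist_nonneg dist_nonneg)

theorem lipschitzWith_two_of_le_sqrt
    (hf : ∀ a b, |f a - f b| ≤ √(dist a.1 b.1 ^ 2 + dist a.2 b.2 ^ 2)) : LipschitzWith 2 f := by
  refine LipschitzWith.of_dist_le_mul fun a b => ?_
  rw [Real.dist_eq, NNReal.coe_two, two_mul, Prod.dist_eq]
  exact (abs_sub_le_dist_add_dist_of_le_sqrt hf a b).trans
    (add_le_add (le_max_left _ _) (le_max_right _ _))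

end ProductLipschitz

section Shell

variable {E : Type*} [NormedAddCommGroup E] [ProperSpace E] [MeasurableSpace E] {K : Set E}

theorem IsCompact.measurableSet_add_closedBall_sdiff [OpensMeasurableSpace E] (hK : IsCompact K)
    (ρ : ℝ) :
    MeasurableSet ((K + closedBall 0 ρ) \ K) :=
  (hK.add (isCompact_closedBall 0 ρ)).isClosed.measurableSet.diff hK.isClosed.measurableSet

theorem IsCompact.measure_add_closedBall_sdiff_ne_top (hK : IsCompact K) (ρ : ℝ) (μ : Measure E)
    [IsFiniteMeasureOnCompacts μ] : μ ((K + closedBall 0 ρ) \ K) ≠ ⊤ :=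
  (measure_mono sdiff_subset).trans_lt (hK.add (isCompact_closedBall 0 ρ)).measure_lt_top |>.ne

end Shell

theorem abs_setIntegral_sub_setIntegral_le {α : Type*} [MeasurableSpace α] {μ : Measure α}
    {A B : Set α} {g h φ : α → ℝ} (hA : MeasurableSet A) (hB : MeasurableSet B)
    (hAμ : μ A ≠ ⊤) (hBμ : μ B ≠ ⊤) (hg : AEStronglyMeasurable g μ)
    (hh : AEStronglyMeasurable h μ) (hg1 : ∀ x, |g x| ≤ 1) (hh1 : ∀ x, |h x| ≤ 1)
    (hφ : IntegrableOn φ (A ∩ B) μ) (hghφ : ∀ x ∈ A ∩ B, |g x - h x| ≤ φ x) :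
    |∫ x in A, g x ∂μ - ∫ x in B, h x ∂μ|
      ≤ ∫ x in A ∩ B, φ x ∂μ + μ.real ((A \ B) ∪ (B \ A)) := by
  have hg_int : IntegrableOn g A μ := Measure.integrableOn_of_bounded hAμ hg (ae_of_all _ hg1)
  have hh_int : IntegrableOn h B μ := Measure.integrableOn_of_bounded hBμ hh (ae_of_all _ hh1)
  have hAB_fin : μ (A \ B) ≠ ⊤ := ne_top_of_le_ne_top hAμ (measure_mono sdiff_subset)
  have hBA_fin : μ (B \ A) ≠ ⊤ := ne_top_of_le_ne_top hBμ (measure_mono sdiff_subset)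
  have hg_int' := hg_int.mono_set (inter_subset_left (t := B))
  have hh_int' := hh_int.mono_set (inter_subset_right (s := A))
  have hinter : |∫ x in A ∩ B, g x ∂μ - ∫ x in A ∩ B, h x ∂μ| ≤ ∫ x in A ∩ B, φ x ∂μ := by
    rw [← integral_sub hg_int' hh_int']
    exact abs_integral_le_integral_abs.trans <|
      setIntegral_mono_on (hg_int'.sub hh_int').abs hφ (hA.inter hB) hghφ
  have hAB : |∫ x in A \ B, g x ∂μ| ≤ μ.real (A \ B) := by
    simpa using norm_setIntegral_le_of_norm_le_const hAB_fin.lt_top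
      fun x _ => (Real.norm_eq_abs _).trans_le (hg1 x)
  have hBA : |∫ x in B \ A, h x ∂μ| ≤ μ.real (B \ A) := by
    simpa using norm_setIntegral_le_of_norm_le_const hBA_fin.lt_top
      fun x _ => (Real.norm_eq_abs _).trans_le (hh1 x)
  rw [← integral_inter_add_sdiff hB hg_int, ← integral_inter_add_sdiff hA hh_int,
    inter_comm B A, measureReal_union disjoint_sdiff_sdiff (hB.diff hA) hAB_fin hBA_fin]
  calc _ = |(∫ x in A ∩ B, g x ∂μ - ∫ x in A ∩ B, h x ∂μ) + ∫ x in A \ B, g x ∂μ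
          + -∫ x in B \ A, h x ∂μ| := by ring_nf
    _ ≤ _ := abs_add_three _ _ _
    _ ≤ _ := by rw [abs_neg]; linarith

theorem dbL_mu_le_general
    (n : ℕ) (ρ : ℝ)
    (K L : Set (EuclideanSpace ℝ (Fin n)))
    (hKcpt : IsCompact K) (hKcvx : Convex ℝ K)
    (hLcpt : IsCompact L) (hLcvx : Convex ℝ L)
    (pK pL : EuclideanSpace ℝ (Fin n) → EuclideanSpace ℝ (Fin n))
    (hpK : ∀ x, pK x ∈ K ∧ dist x (pK x) = infDist x K)
    (hpL : ∀ x, pL x ∈ L ∧ dist x (pL x) = infDist x L)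
    (uK uL : EuclideanSpace ℝ (Fin n) → EuclideanSpace ℝ (Fin n))
    (huK : ∀ x, uK x = ‖x - pK x‖⁻¹ • (x - pK x))
    (huL : ∀ x, uL x = ‖x - pL x‖⁻¹ • (x - pL x)) :
    boundedLipschitzDist
        (Measure.map (fun x => (pK x, uK x))
          (volume.restrict ((K + closedBall (0 : EuclideanSpace ℝ (Fin n)) ρ) \ K)))
        (Measure.map (fun x => (pL x, uL x))
          (volume.restrict ((L + closedBall (0 : EuclideanSpace ℝ (Fin n)) ρ) \ L)))
      ≤ (∫ x in ((K + closedBall (0 : EuclideanSpace ℝ (Fin n)) ρ) \ K) ∩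
            ((L + closedBall (0 : EuclideanSpace ℝ (Fin n)) ρ) \ L), ‖pK x - pL x‖)
        + (∫ x in ((K + closedBall (0 : EuclideanSpace ℝ (Fin n)) ρ) \ K) ∩
            ((L + closedBall (0 : EuclideanSpace ℝ (Fin n)) ρ) \ L), ‖uK x - uL x‖)
        + (volume
            ((((K + closedBall (0 : EuclideanSpace ℝ (Fin n)) ρ) \ K) \
                ((L + closedBall (0 : EuclideanSpace ℝ (Fin n)) ρ) \ L)) ∪
             (((L + closedBall (0 : EuclideanSpace ℝ (Fin n)) ρ) \ L) \
                ((K + closedBall (0 : EuclideanSpace ℝ (Fin n)) ρ) \ K)))).toReal := by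
  obtain rfl : uK = _ := funext huK
  obtain rfl : uL = _ := funext huL
  set A := (K + closedBall (0 : EuclideanSpace ℝ (Fin n)) ρ) \ K
  set B := (L + closedBall (0 : EuclideanSpace ℝ (Fin n)) ρ) \ L
  have hAμ := hKcpt.measure_add_closedBall_sdiff_ne_top ρ volume
  have hpK_cont := (lipschitzWith_one_of_dist_eq_infDist hKcvx hpK).continuous
  have hpL_cont := (lipschitzWith_one_of_dist_eq_infDist hLcvx hpL).continuous
  refine Real.sSup_le ?_ (by positivity)
  rintro _ ⟨f, hf_lip, hf_bdd, rfl⟩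
  have hf := (lipschitzWith_two_of_le_sqrt hf_lip).continuous
  rw [integral_map (by fun_prop) hf.aestronglyMeasurable,
    integral_map (by fun_prop) hf.aestronglyMeasurable]
  have hp_int : IntegrableOn (fun x => ‖pK x - pL x‖) (A ∩ B) :=
    ((hpK_cont.sub hpL_cont).norm.continuousOn.integrableOn_compact
      (hKcpt.add (isCompact_closedBall 0 ρ))).mono_set (inter_subset_left.trans sdiff_subset)
  have hu_int : IntegrableOn (fun x => ‖‖x - pK x‖⁻¹ • (x - pK x) - ‖x - pL x‖⁻¹ • (x - pL x)‖)
      (A ∩ B) :=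
    Measure.integrableOn_of_bounded (ne_top_of_le_ne_top hAμ (measure_mono inter_subset_left))
      (by fun_prop)
      (ae_of_all _ fun _ => (norm_norm _).trans_le (norm_sub_inv_norm_smul_le_two _ _))
  rw [← integral_add hp_int hu_int]
  exact abs_setIntegral_sub_setIntegral_le (hKcpt.measurableSet_add_closedBall_sdiff ρ)
    (hLcpt.measurableSet_add_closedBall_sdiff ρ) hAμ
    (hLcpt.measure_add_closedBall_sdiff_ne_top ρ volume) (by fun_prop) (by fun_prop)
    (fun _ => hf_bdd _) (fun _ => hf_bdd _) (hp_int.add hu_int) fun x _ => by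
      simpa only [dist_eq_norm] using abs_sub_le_dist_add_dist_of_le_sqrt hf_lip _ (pL x, _)

/-- For convex bodies K, L and ρ > 0, with μ_{K,ρ} the pushforward of Lebesgue measure
restricted to the shell K^ρ = (K + ρBⁿ) \ K under x ↦ (p_K(x), u_K(x)),
the bounded Lipschitz distance of μ_{K,ρ} and μ_{L,ρ} is at most
∫_{K^ρ∩L^ρ} |p_K − p_L| + ∫_{K^ρ∩L^ρ} |u_K − u_L| + ℋⁿ(K^ρ △ L^ρ). -/
theorem dbL_mu_le
    (n : ℕ) (ρ : ℝ) (hρ : 0 < ρ)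
    (K L : Set (EuclideanSpace ℝ (Fin n)))
    (hKne : K.Nonempty) (hKcpt : IsCompact K) (hKcvx : Convex ℝ K)
    (hLne : L.Nonempty) (hLcpt : IsCompact L) (hLcvx : Convex ℝ L)
    (pK pL : EuclideanSpace ℝ (Fin n) → EuclideanSpace ℝ (Fin n))
    (hpK : ∀ x, pK x ∈ K ∧ dist x (pK x) = infDist x K)
    (hpL : ∀ x, pL x ∈ L ∧ dist x (pL x) = infDist x L)
    (uK uL : EuclideanSpace ℝ (Fin n) → EuclideanSpace ℝ (Fin n))
    (huK : ∀ x, uK x = ‖x - pK x‖⁻¹ • (x - pK x))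
    (huL : ∀ x, uL x = ‖x - pL x‖⁻¹ • (x - pL x)) :
    boundedLipschitzDist
        (Measure.map (fun x => (pK x, uK x))
          (volume.restrict ((K + closedBall (0 : EuclideanSpace ℝ (Fin n)) ρ) \ K)))
        (Measure.map (fun x => (pL x, uL x))
          (volume.restrict ((L + closedBall (0 : EuclideanSpace ℝ (Fin n)) ρ) \ L)))
      ≤ (∫ x in ((K + closedBall (0 : EuclideanSpace ℝ (Fin n)) ρ) \ K) ∩
            ((L + closedBall (0 : EuclideanSpace ℝ (Fin n)) ρ) \ L), ‖pK x - pL x‖)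
        + (∫ x in ((K + closedBall (0 : EuclideanSpace ℝ (Fin n)) ρ) \ K) ∩
            ((L + closedBall (0 : EuclideanSpace ℝ (Fin n)) ρ) \ L), ‖uK x - uL x‖)
        + (volume
            ((((K + closedBall (0 : EuclideanSpace ℝ (Fin n)) ρ) \ K) \
                ((L + closedBall (0 : EuclideanSpace ℝ (Fin n)) ρ) \ L)) ∪
             (((L + closedBall (0 : EuclideanSpace ℝ (Fin n)) ρ) \ L) \
                ((K + closedBall (0 : EuclideanSpace ℝ (Fin n)) ρ) \ K)))).toReal :=
  dbL_mu_le_general n ρ K L hKcpt hKcvx hLcpt hLcvx pK pL hpK hpL uK uL huK huL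
end

section
/- Let V be an n-dimensional inner product space with the induced inner products on exterior powers. If ξ ∈ ⋀_p V and η ∈ ⋀_q V and at least one of ξ, η is simple (decomposable), then |ξ ∧ η| ≤ |ξ| |η|. -/
open scoped RealInnerProductSpace

/-!
Write `ξ = v₁ ∧ ⋯ ∧ v_p`. If the `vᵢ` are dependent then `ξ = 0`. Otherwise Gram–Schmidt gives
an orthonormal family `f` with `ξ = t • (f₁ ∧ ⋯ ∧ f_p)`; extend `f` to an orthonormal basis `b`
and expand `η` in the wedges of `b`. Split `η = g + r`, where `g` collects the wedges of basis
vectors orthogonal to every `fⱼ`. Then `f₁ ∧ ⋯ ∧ f_p ∧ r = 0`, the Gram determinants make `g` and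
`r` orthogonal, and the Gram matrices of the wedges in `f ∧ g` are block triangular with an
identity block, so `|f ∧ g| = |g|`. Hence `|ξ ∧ η| = |t| |g| ≤ |t| |η| = |ξ| |η|`.
-/

open ExteriorAlgebra Function Set Submodule InnerProductSpace

theorem Module.Basis.alternatingMap_apply_eq_det_smul {ι R M N : Type*} [Fintype ι]
    [DecidableEq ι] [CommRing R] [AddCommGroup M] [Module R M] [AddCommGroup N] [Module R N]
    (e : Module.Basis ι R M) (g : M [⋀^ι]→ₗ[R] N) (w : ι → M) :
    g w = e.det w • g e := by
  have h : g = e.det.smulRight (g e) := by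
    refine e.ext_alternating fun i hi => ?_
    let σ : Equiv.Perm ι := Equiv.ofBijective i (Finite.injective_iff_bijective.1 hi)
    change g (e ∘ σ) = e.det.smulRight (g e) (e ∘ σ)
    simp [AlternatingMap.map_perm, Module.Basis.det_self]
  conv_lhs => rw [h]
  rfl

theorem AlternatingMap.exists_apply_eq_smul_of_forall_mem_span {ι R M N : Type*} [Fintype ι]
    [DecidableEq ι] [CommRing R] [AddCommGroup M] [Module R M] [AddCommGroup N] [Module R N]
    (g : M [⋀^ι]→ₗ[R] N) {u w : ι → M} (hw : LinearIndependent R w)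
    (hu : ∀ i, u i ∈ span R (range w)) :
    ∃ t : R, g u = t • g w := by
  let e := Module.Basis.span hw
  refine ⟨e.det fun i => ⟨u i, hu i⟩, ?_⟩
  have := e.alternatingMap_apply_eq_det_smul (g.compLinearMap (span R (range w)).subtype)
    fun i => ⟨u i, hu i⟩
  simpa [e, Module.Basis.span_apply] using this

theorem Orthonormal.exists_orthonormalBasis_comp_eq {𝕜 E ι : Type*} [RCLike 𝕜]
    [NormedAddCommGroup E] [InnerProductSpace 𝕜 E] [FiniteDimensional 𝕜 E] {f : ι → E}
    (hf : Orthonormal 𝕜 f) :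
    ∃ (u : Finset E) (b : OrthonormalBasis u 𝕜 E) (c : ι → u), Injective c ∧ b ∘ c = f := by
  have hinj := hf.linearIndependent.injective
  obtain ⟨u, b, hfu, hb⟩ :=
    ((orthonormal_subtype_range hinj).2 hf).exists_orthonormalBasis_extension
  refine ⟨u, b, fun i => ⟨f i, hfu (mem_range_self i)⟩,
    fun i j h => hinj (congrArg Subtype.val h), ?_⟩
  funext i
  simp [hb]

theorem ExteriorAlgebra.exists_sum_smul_ιMulti_comp_eq {ι R M : Type*} [Fintype ι] [CommRing R]
    [AddCommGroup M] [Module R M] (b : Module.Basis ι R M) {q : ℕ} {η : ExteriorAlgebra R M}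
    (hη : η ∈ ⋀[R]^q M) :
    ∃ x : (Fin q → ι) → R, ∑ a, x a • ιMulti R q (b ∘ a) = η := by
  rw [← mem_span_range_iff_exists_fun]
  rw [← exteriorPower.ιMulti_span_fixedDegree_of_span_eq_top R q M b.span_eq] at hη
  refine span_mono ?_ hη
  rintro _ ⟨w, hw, rfl⟩
  choose a ha using fun i => hw (mem_range_self i)
  exact ⟨a, congrArg _ (funext ha)⟩

theorem ExteriorAlgebra.ιMulti_mul_ιMulti_eq_zero_of_eq {R M : Type*} [CommRing R]
    [AddCommGroup M] [Module R M] {p q : ℕ} {x : Fin p → M} {y : Fin q → M} {i : Fin p}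
    {j : Fin q} (h : x i = y j) :
    ιMulti R p x * ιMulti R q y = 0 := by
  rw [ιMulti_mul_ιMulti]
  refine AlternatingMap.map_eq_zero_of_eq _ _ (i := Fin.castAdd q i) (j := Fin.natAdd p j)
    (by simpa using h) (by simp [Fin.ext_iff]; omega)

theorem LinearMap.apply_sum_smul_sum {ι κ R M N P : Type*} [CommSemiring R] [AddCommMonoid M]
    [Module R M] [AddCommMonoid N] [Module R N] [AddCommMonoid P] [Module R P]
    (B : M →ₗ[R] N →ₗ[R] P) (s : Finset ι) (t : Finset κ) (x : ι → R) (u : ι → M)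
    (y : κ → R) (w : κ → N) :
    B (∑ i ∈ s, x i • u i) (∑ j ∈ t, y j • w j)
      = ∑ i ∈ s, ∑ j ∈ t, (x i * y j) • B (u i) (w j) := by
  rw [map_sum B, LinearMap.sum_apply]
  refine Finset.sum_congr rfl fun i _ => ?_
  rw [map_smul, LinearMap.smul_apply, map_sum, Finset.smul_sum]
  refine Finset.sum_congr rfl fun j _ => ?_
  rw [map_smul, smul_smul]

theorem Matrix.det_inner_append_of_orthonormal {𝕜 E : Type*} [RCLike 𝕜] [NormedAddCommGroup E]
    [InnerProductSpace 𝕜 E] {p q : ℕ} {f : Fin p → E} (hf : Orthonormal 𝕜 f) {x y : Fin q → E}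
    (hx : ∀ i j, inner 𝕜 (x i) (f j) = 0) :
    (Matrix.of fun i j => inner 𝕜 (Fin.append f x i) (Fin.append f y j)).det
      = (Matrix.of fun i j => inner 𝕜 (x i) (y j)).det := by
  classical
  have hblocks : (Matrix.of fun i j => inner 𝕜 (Fin.append f x i) (Fin.append f y j)).submatrix
      finSumFinEquiv finSumFinEquiv
      = Matrix.fromBlocks 1 (Matrix.of fun i j => inner 𝕜 (f i) (y j)) 0
          (Matrix.of fun i j => inner 𝕜 (x i) (y j)) := by
    ext (i | i) (j | j) <;>
      simp [Matrix.one_apply, orthonormal_iff_ite.mp hf, hx]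
  rw [← Matrix.det_submatrix_equiv_self finSumFinEquiv, hblocks, Matrix.det_fromBlocks_zero₂₁,
    Matrix.det_one, one_mul]

section GramPairing

variable {V : Type*} [NormedAddCommGroup V] [InnerProductSpace ℝ V]

def IsGramPairing (B : ExteriorAlgebra ℝ V →ₗ[ℝ] ExteriorAlgebra ℝ V →ₗ[ℝ] ℝ) : Prop :=
  ∀ (m : ℕ) (v w : Fin m → V),
    B (ιMulti ℝ m v) (ιMulti ℝ m w) = (Matrix.of fun i j => ⟪v i, w j⟫).det

namespace IsGramPairing

variable {B : ExteriorAlgebra ℝ V →ₗ[ℝ] ExteriorAlgebra ℝ V →ₗ[ℝ] ℝ} {m : ℕ}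

theorem apply_comm (hB : IsGramPairing B) (x y : Fin m → V) :
    B (ιMulti ℝ m x) (ιMulti ℝ m y) = B (ιMulti ℝ m y) (ιMulti ℝ m x) := by
  rw [hB, hB, ← Matrix.det_transpose]
  congr 1
  ext i j
  exact real_inner_comm _ _

theorem apply_eq_zero_of_forall_inner_eq_zero (hB : IsGramPairing B) {x y : Fin m → V}
    (j : Fin m) (h : ∀ i, ⟪x i, y j⟫ = 0) :
    B (ιMulti ℝ m x) (ιMulti ℝ m y) = 0 := by
  rw [hB]
  exact Matrix.det_eq_zero_of_column_eq_zero j h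

theorem apply_self_of_orthonormal (hB : IsGramPairing B) {f : Fin m → V}
    (hf : Orthonormal ℝ f) :
    B (ιMulti ℝ m f) (ιMulti ℝ m f) = 1 := by
  classical
  rw [hB, ← Matrix.det_one (n := Fin m), ← Matrix.gram_eq_one_iff_orthonormal.mpr hf]
  rfl

theorem apply_ιMulti_mul_ιMulti_mul (hB : IsGramPairing B) {p q : ℕ} {f : Fin p → V}
    (hf : Orthonormal ℝ f) {x y : Fin q → V} (hx : ∀ i j, ⟪x i, f j⟫ = 0) :
    B (ιMulti ℝ p f * ιMulti ℝ q x) (ιMulti ℝ p f * ιMulti ℝ q y)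
      = B (ιMulti ℝ q x) (ιMulti ℝ q y) := by
  rw [ιMulti_mul_ιMulti, ιMulti_mul_ιMulti, hB, hB,
    Matrix.det_inner_append_of_orthonormal hf hx]

theorem apply_comp_eq_zero_of_forall_ne (hB : IsGramPairing B) {ι : Type*} [Fintype ι]
    (b : OrthonormalBasis ι ℝ V) {a a' : Fin m → ι} (j : Fin m) (h : ∀ i, a i ≠ a' j) :
    B (ιMulti ℝ m (b ∘ a)) (ιMulti ℝ m (b ∘ a')) = 0 :=
  hB.apply_eq_zero_of_forall_inner_eq_zero j fun i => b.inner_eq_zero (h i)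

theorem apply_ιMulti_mul_self_le [FiniteDimensional ℝ V] (hB : IsGramPairing B)
    (hpos : ∀ x, 0 ≤ B x x) {p q : ℕ} {f : Fin p → V} (hf : Orthonormal ℝ f)
    {η : ExteriorAlgebra ℝ V} (hη : η ∈ ⋀[ℝ]^q V) :
    B (ιMulti ℝ p f * η) (ιMulti ℝ p f * η) ≤ B η η := by
  classical
  obtain ⟨u, b, c, hc, rfl⟩ := hf.exists_orthonormalBasis_comp_eq
  obtain ⟨x, rfl⟩ := exists_sum_smul_ιMulti_comp_eq b.toBasis hη
  simp only [OrthonormalBasis.coe_toBasis]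
  set ε := ιMulti ℝ p (b ∘ c)
  set e : (Fin q → u) → ExteriorAlgebra ℝ V := fun a => ιMulti ℝ q (b ∘ a)
  -- `g` collects the wedges with no factor among the `b ∘ c`
  set P : (Fin q → u) → Prop := fun a => ∀ i j, a i ≠ c j
  set g := ∑ a with P a, x a • e a
  set r := ∑ a with ¬P a, x a • e a
  rw [← Finset.sum_filter_add_sum_filter_not _ P]
  have hεr : ε * r = 0 := by
    simp only [r, Finset.mul_sum, mul_smul_comm]
    refine Finset.sum_eq_zero fun a ha => ?_
    obtain ⟨i, j, hij⟩ : ∃ i j, a i = c j := by simpa [P] using ha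
    rw [ιMulti_mul_ιMulti_eq_zero_of_eq (i := j) (j := i) (by simp [hij]), smul_zero]
  have hεg : B (ε * g) (ε * g) = B g g := by
    simp only [g, Finset.mul_sum, mul_smul_comm, LinearMap.apply_sum_smul_sum]
    refine Finset.sum_congr rfl fun a ha => Finset.sum_congr rfl fun a' _ => ?_
    have ha : P a := (Finset.mem_filter.mp ha).2
    congr 1
    exact hB.apply_ιMulti_mul_ιMulti_mul (b.orthonormal.comp c hc)
      fun i j => b.inner_eq_zero (ha i j)
  have hcross : ∀ a, P a → ∀ a', ¬P a' → B (e a) (e a') = 0 ∧ B (e a') (e a) = 0 := by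
    intro a ha a' ha'
    obtain ⟨j, k, hjk⟩ : ∃ j k, a' j = c k := by simpa [P] using ha'
    have h := hB.apply_comp_eq_zero_of_forall_ne b j fun i => hjk ▸ ha i k
    exact ⟨h, hB.apply_comm _ _ ▸ h⟩
  have hgr : B g r = 0 ∧ B r g = 0 := by
    simp only [g, r, LinearMap.apply_sum_smul_sum]
    constructor <;> refine Finset.sum_eq_zero fun a ha => Finset.sum_eq_zero fun a' ha' => ?_
    · rw [(hcross a (Finset.mem_filter.mp ha).2 a' (Finset.mem_filter.mp ha').2).1, smul_zero]
    · rw [(hcross a' (Finset.mem_filter.mp ha').2 a (Finset.mem_filter.mp ha).2).2, smul_zero]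
  calc B (ε * (g + r)) (ε * (g + r)) = B g g := by rw [mul_add, hεr, add_zero, hεg]
    _ ≤ B g g + B r r := le_add_of_nonneg_right (hpos r)
    _ = B (g + r) (g + r) := by simp only [map_add, LinearMap.add_apply, hgr.1, hgr.2]; ring

end IsGramPairing

end GramPairing

/-- Let V be a finite-dimensional inner product space and let B be the induced inner
product on the exterior algebra of V, characterized on each exterior power by the Gram
determinant formula ⟨v₁∧…∧v_m, w₁∧…∧w_m⟩ = det(⟨v_i, w_j⟩), and positive semidefinite.
If ξ = v₁∧…∧v_p is a simple p-vector and η is any q-vector, then |ξ ∧ η| ≤ |ξ| |η|. -/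
theorem norm_wedge_le_of_simple
    (V : Type*) [NormedAddCommGroup V] [InnerProductSpace ℝ V] [FiniteDimensional ℝ V]
    (B : ExteriorAlgebra ℝ V →ₗ[ℝ] ExteriorAlgebra ℝ V →ₗ[ℝ] ℝ)
    (hGram : ∀ (m : ℕ) (v w : Fin m → V),
      B (ExteriorAlgebra.ιMulti ℝ m v) (ExteriorAlgebra.ιMulti ℝ m w)
        = (Matrix.of fun i j => ⟪v i, w j⟫).det)
    (hpos : ∀ x, 0 ≤ B x x)
    (p q : ℕ) (v : Fin p → V)
    (η : ExteriorAlgebra ℝ V) (hη : η ∈ ⋀[ℝ]^q V) :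
    Real.sqrt (B (ExteriorAlgebra.ιMulti ℝ p v * η) (ExteriorAlgebra.ιMulti ℝ p v * η))
      ≤ Real.sqrt (B (ExteriorAlgebra.ιMulti ℝ p v) (ExteriorAlgebra.ιMulti ℝ p v)) *
        Real.sqrt (B η η) := by
  by_cases hv : LinearIndependent ℝ v
  swap
  · simp [AlternatingMap.map_linearDependent _ v hv]
  have hf := gramSchmidtNormed_orthonormal hv
  obtain ⟨t, ht⟩ := (ιMulti ℝ p).exists_apply_eq_smul_of_forall_mem_span (u := v)
    hf.linearIndependent fun i => by
      rw [span_gramSchmidtNormed_range, span_gramSchmidt]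
      exact subset_span (mem_range_self i)
  have hB : IsGramPairing B := hGram
  rw [ht, smul_mul_assoc, ← Real.sqrt_mul (hpos _)]
  simp only [map_smul, LinearMap.smul_apply, smul_eq_mul, hB.apply_self_of_orthonormal hf,
    mul_one]
  refine Real.sqrt_le_sqrt ?_
  rw [← mul_assoc]
  exact mul_le_mul_of_nonneg_left (hB.apply_ιMulti_mul_self_le hpos hf hη) (mul_self_nonneg t)
end

section
/- Let u, v be unit vectors in ℝⁿ with u • v ≥ 1 − 1/(2n), and let (b₁,…,b_{n-1}) and (b̄₁,…,b̄_{n-1}) be orthonormal bases of u^⊥ and v^⊥ respectively such that det(b₁,…,b_{n-1},u) = det(b̄₁,…,b̄_{n-1},v) = 1. Then the (n-1)×(n-1) matrix B with entries B_{ij} = b_i • b̄_j has positive determinant. -/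
/-!
Put `M := Aᵀ A'`, where `A` and `A'` are the matrices with columns `(b₁, …, b_{n-1}, u)` and
`(b̄₁, …, b̄_{n-1}, v)`. Both are special orthogonal, hence so is `M`, and `M i j` is the inner
product of the `i`-th column of `A` with the `j`-th column of `A'`. The matrix `(b_i • b̄_j)` is
the top-left minor of `M`, and for a special orthogonal matrix the adjugate is the transpose, so
this minor equals the corner entry `M n n = u • v`, which is positive.
-/

open scoped InnerProductSpace RealInnerProductSpace
open Matrix

theorem Orthonormal.snoc {𝕜 E : Type*} [RCLike 𝕜] [NormedAddCommGroup E] [InnerProductSpace 𝕜 E]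
    {m : ℕ} {b : Fin m → E} {u : E} (hb : Orthonormal 𝕜 b) (hu : ‖u‖ = 1)
    (hbu : ∀ i, ⟪b i, u⟫_𝕜 = 0) : Orthonormal 𝕜 (Fin.snoc (α := fun _ => E) b u) := by
  classical
  rw [orthonormal_iff_ite] at hb ⊢
  intro i j
  induction i using Fin.lastCases <;> induction j using Fin.lastCases <;>
    simp [hb, hbu, inner_eq_zero_symm.mp (hbu _), inner_self_eq_norm_sq_to_K, hu,
      Fin.castSucc_ne_last, (Fin.castSucc_ne_last _).symm]

namespace Matrix

variable {n R : Type*} [Fintype n] [DecidableEq n] [CommRing R]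

theorem adjugate_eq_transpose_of_mem_specialOrthogonalGroup {M : Matrix n n R}
    (hM : M ∈ specialOrthogonalGroup n R) : adjugate M = Mᵀ := by
  rw [mem_specialOrthogonalGroup_iff, mem_orthogonalGroup_iff] at hM
  rw [← inv_eq_right_inv hM.1, inv_def, hM.2, Ring.inverse_one, one_smul]

theorem transpose_mul_mem_specialOrthogonalGroup {A B : Matrix n n R}
    (hA : A ∈ specialOrthogonalGroup n R) (hB : B ∈ specialOrthogonalGroup n R) :
    Aᵀ * B ∈ specialOrthogonalGroup n R := by
  rw [mem_specialOrthogonalGroup_iff, mem_orthogonalGroup_iff'] at hA hB ⊢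
  refine ⟨?_, by rw [det_mul, det_transpose, hA.2, hB.2, one_mul]⟩
  rw [transpose_mul, transpose_transpose, Matrix.mul_assoc, ← Matrix.mul_assoc A,
    mul_eq_one_comm.mp hA.1, Matrix.one_mul, hB.1]

theorem det_submatrix_succAbove_of_mem_specialOrthogonalGroup {m : ℕ}
    {M : Matrix (Fin (m + 1)) (Fin (m + 1)) R} (hM : M ∈ specialOrthogonalGroup _ R)
    (i j : Fin (m + 1)) :
    det (M.submatrix i.succAbove j.succAbove) = (-1) ^ (i + j : ℕ) * M i j := by
  have h := adjugate_fin_succ_eq_det_submatrix M j i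
  rw [adjugate_eq_transpose_of_mem_specialOrthogonalGroup hM, transpose_apply] at h
  rw [h, ← mul_assoc, ← mul_pow, neg_one_mul, neg_neg, one_pow, one_mul]

end Matrix

theorem EuclideanSpace.transpose_of_mul_of {ι κ n : Type*} [Fintype n]
    (f : ι → EuclideanSpace ℝ n) (g : κ → EuclideanSpace ℝ n) :
    (of fun i j => f j i)ᵀ * (of fun i j => g j i) = of fun i j => ⟪f i, g j⟫ := by
  ext i j
  simp [mul_apply, PiLp.inner_apply, mul_comm]

theorem Orthonormal.of_apply_mem_orthogonalGroup {n : Type*} [Fintype n] [DecidableEq n]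
    {f : n → EuclideanSpace ℝ n} (hf : Orthonormal ℝ f) :
    (of fun i j => f j i) ∈ orthogonalGroup n ℝ := by
  rw [mem_orthogonalGroup_iff', EuclideanSpace.transpose_of_mul_of]
  ext i j
  simp [orthonormal_iff_ite.mp hf, one_apply]

/-- Let u, v be unit vectors in ℝⁿ (n = m+1) with u•v ≥ 1 − 1/(2n), and let
(b₁,…,b_{n-1}) and (b̄₁,…,b̄_{n-1}) be orthonormal bases of u^⊥ and v^⊥ respectively
with det(b₁,…,b_{n-1},u) = det(b̄₁,…,b̄_{n-1},v) = 1. Then the matrix (b_i • b̄_j) has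
positive determinant. -/
theorem det_inner_basis_pos
    (m : ℕ) (u v : EuclideanSpace ℝ (Fin (m + 1)))
    (hu : ‖u‖ = 1) (hv : ‖v‖ = 1)
    (huv : 1 - 1 / (2 * (m + 1)) ≤ ⟪u, v⟫)
    (b b' : Fin m → EuclideanSpace ℝ (Fin (m + 1)))
    (hb : Orthonormal ℝ b) (hb' : Orthonormal ℝ b')
    (hbu : ∀ i, ⟪b i, u⟫ = 0) (hb'v : ∀ i, ⟪b' i, v⟫ = 0)
    (hdetb : (Matrix.of fun i j =>
      (Fin.snoc (α := fun _ => EuclideanSpace ℝ (Fin (m + 1))) b u j) i).det = 1)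
    (hdetb' : (Matrix.of fun i j =>
      (Fin.snoc (α := fun _ => EuclideanSpace ℝ (Fin (m + 1))) b' v j) i).det = 1) :
    0 < (Matrix.of fun i j : Fin m => ⟪b i, b' j⟫).det := by
  have hM := transpose_mul_mem_specialOrthogonalGroup
    (mem_specialOrthogonalGroup_iff.mpr ⟨(hb.snoc hu hbu).of_apply_mem_orthogonalGroup, hdetb⟩)
    (mem_specialOrthogonalGroup_iff.mpr ⟨(hb'.snoc hv hb'v).of_apply_mem_orthogonalGroup, hdetb'⟩)
  rw [EuclideanSpace.transpose_of_mul_of] at hM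
  have hminor : (of fun i j : Fin m => ⟪b i, b' j⟫).det = ⟪u, v⟫ := by
    simpa [submatrix, ← two_mul, pow_mul] using
      det_submatrix_succAbove_of_mem_specialOrthogonalGroup hM (Fin.last m) (Fin.last m)
  have hsmall : (1 : ℝ) / (2 * (m + 1)) < 1 := by
    rw [div_lt_one (by positivity)]
    linarith [m.cast_nonneg (α := ℝ)]
  linarith
end
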